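/- arXiv:math/0310424 — 6 statements merged into one kernel-verified Lean document; each statement's English description precedes it below -/
import Mathlib

section
/- For every skew shape λ/κ with n cells, Σ_{T a super tableau of shape λ/κ} z^T = Σ_{S a standard tableau of shape λ/κ} Q̃_{n, d(S)}(z, w), as formal power series in the variables z_1, z_2, … and w_1, w_2, …. (This is the expansion of the super Schur function ω^W s_{λ/κ}[Z+W] into super quasisymmetric functions indexed by descent sets of standard tableaux; setting w = 0 recovers Gessel's expansion of the skew Schur function.) -/
open Classical

namespace HHL

/-- The set of cells of the skew shape `λ/κ`. -/
def skewCells (kap lam : YoungDiagram) : Set (ℕ × ℕ) := {x | x ∈ lam ∧ x ∉ kap}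

/-- A super tableau of the skew shape `λ/κ`, with the super alphabet
`A± = {1 < 1̄ < 2 < 2̄ < ⋯}` encoded by naturals `≥ 2` (the positive letter `a`
is `2a`, the negative letter `ā` is `2a+1`): entries weakly increase along rows
and columns, two equal entries in a row must be positive, and two equal entries
in a column must be negative (equivalently, each positive letter occupies a
horizontal strip and each negative letter a vertical strip). -/
def IsSuperSkew (kap lam : YoungDiagram) (T : ℕ × ℕ → ℕ) : Prop :=
  (∀ x : ℕ × ℕ, x ∉ skewCells kap lam → T x = 0) ∧
  (∀ x ∈ skewCells kap lam, 2 ≤ T x) ∧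
  (∀ i j1 j2 : ℕ, j1 ≤ j2 → (i, j1) ∈ skewCells kap lam →
    (i, j2) ∈ skewCells kap lam → T (i, j1) ≤ T (i, j2)) ∧
  (∀ i1 i2 j : ℕ, i1 ≤ i2 → (i1, j) ∈ skewCells kap lam →
    (i2, j) ∈ skewCells kap lam → T (i1, j) ≤ T (i2, j)) ∧
  (∀ i j1 j2 : ℕ, j1 < j2 → (i, j1) ∈ skewCells kap lam →
    (i, j2) ∈ skewCells kap lam → T (i, j1) = T (i, j2) → T (i, j1) % 2 = 0) ∧
  (∀ i1 i2 j : ℕ, i1 < i2 → (i1, j) ∈ skewCells kap lam →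
    (i2, j) ∈ skewCells kap lam → T (i1, j) = T (i2, j) → T (i1, j) % 2 = 1)

/-- A standard tableau of the skew shape `λ/κ` with `n` cells: a bijection from
the cells onto `{1, …, n}` increasing along rows and columns. -/
def IsStdSkew (kap lam : YoungDiagram) (n : ℕ) (S : ℕ × ℕ → ℕ) : Prop :=
  (∀ x : ℕ × ℕ, x ∉ skewCells kap lam → S x = 0) ∧
  Set.BijOn S (skewCells kap lam) (Set.Icc 1 n) ∧
  (∀ i j1 j2 : ℕ, j1 < j2 → (i, j1) ∈ skewCells kap lam →
    (i, j2) ∈ skewCells kap lam → S (i, j1) < S (i, j2)) ∧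
  (∀ i1 i2 j : ℕ, i1 < i2 → (i1, j) ∈ skewCells kap lam →
    (i2, j) ∈ skewCells kap lam → S (i1, j) < S (i2, j))

/-- The descent set `d(S)` of a standard tableau `S` of the skew shape: letters
`a` such that the cells `x = (i,j)`, `y = (i',j')` with `S x = a`,
`S y = a + 1` satisfy `j ≥ j'`. -/
def descSkew (kap lam : YoungDiagram) (S : ℕ × ℕ → ℕ) : Set ℕ :=
  {a | ∃ x y : ℕ × ℕ, x ∈ skewCells kap lam ∧ y ∈ skewCells kap lam ∧
    S x = a ∧ S y = a + 1 ∧ y.2 ≤ x.2}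

/-- A weakly increasing word `a_1 ≤ ⋯ ≤ a_n` in the super alphabet such that
equal consecutive positive letters avoid `D` and equal consecutive negative
letters occur at positions of `D`; these index the monomials of the super
quasisymmetric function `Q̃_{n,D}(z,w)`. -/
def IsSuperWord (n : ℕ) (D : Set ℕ) (a : Fin n → ℕ) : Prop :=
  (∀ i, 2 ≤ a i) ∧ Monotone a ∧
  ∀ (k : ℕ) (h1 : k < n) (h2 : k + 1 < n),
    a ⟨k, h1⟩ = a ⟨k + 1, h2⟩ →
      ((a ⟨k, h1⟩ % 2 = 0 → (k + 1) ∉ D) ∧ (a ⟨k, h1⟩ % 2 = 1 → (k + 1) ∈ D))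


section Aux

def cellsF (kap lam : YoungDiagram) : Finset (ℕ × ℕ) := lam.cells \ kap.cells

lemma mem_skew_iff (kap lam : YoungDiagram) (x : ℕ × ℕ) :
    x ∈ skewCells kap lam ↔ x ∈ cellsF kap lam := by
  simp [skewCells, cellsF, YoungDiagram.mem_cells]

lemma corner_mem (kap lam : YoungDiagram) {i1 i2 j1 j2 : ℕ}
    (hx : (i1, j1) ∈ skewCells kap lam) (hy : (i2, j2) ∈ skewCells kap lam)
    (hi : i1 ≤ i2) (hj : j1 ≤ j2) : (i1, j2) ∈ skewCells kap lam :=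
  ⟨lam.up_left_mem hi le_rfl hy.1, fun hk => hx.2 (kap.up_left_mem le_rfl hj hk)⟩

lemma super_strict {kap lam : YoungDiagram} {T : ℕ × ℕ → ℕ} (hT : IsSuperSkew kap lam T)
    {x y : ℕ × ℕ} (hx : x ∈ skewCells kap lam) (hy : y ∈ skewCells kap lam)
    (hi : x.1 < y.1) (hj : x.2 < y.2) : T x < T y := by
  obtain ⟨i1, j1⟩ := x
  obtain ⟨i2, j2⟩ := y
  obtain ⟨-, -, hrow, hcol, hrowP, hcolP⟩ := hT
  simp only at hi hj
  have hz : (i1, j2) ∈ skewCells kap lam := corner_mem kap lam hx hy hi.le hj.le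
  have h1 : T (i1, j1) ≤ T (i1, j2) := hrow i1 j1 j2 hj.le hx hz
  have h2 : T (i1, j2) ≤ T (i2, j2) := hcol i1 i2 j2 hi.le hz hy
  rcases lt_or_eq_of_le (h1.trans h2) with h | h
  · exact h
  · exfalso
    have e1 : T (i1, j1) = T (i1, j2) := by omega
    have heven := hrowP i1 j1 j2 hj hx hz e1
    have hodd := hcolP i1 i2 j2 hi hz hy (by omega)
    omega

def key (T : ℕ × ℕ → ℕ) (x : ℕ × ℕ) : ℕ ×ₗ ℕ :=
  toLex (T x, if T x % 2 = 0 then x.2 else x.1)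

lemma key_lt_of_lt {T : ℕ × ℕ → ℕ} {x y : ℕ × ℕ} (h : T x < T y) : key T x < key T y := by
  rw [key, key, Prod.Lex.lt_iff]; exact Or.inl h

lemma val_le_of_key_le {T : ℕ × ℕ → ℕ} {x y : ℕ × ℕ} (h : key T x ≤ key T y) : T x ≤ T y := by
  rw [key, key, Prod.Lex.le_iff] at h
  rcases h with h | h
  · exact le_of_lt h
  · exact le_of_eq h.1

lemma key_fst {T : ℕ × ℕ → ℕ} {x y : ℕ × ℕ} (h : key T x = key T y) : T x = T y :=
  congrArg (fun z => (ofLex z).1) h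

lemma key_snd {T : ℕ × ℕ → ℕ} {x y : ℕ × ℕ} (h : key T x = key T y) :
    (if T x % 2 = 0 then x.2 else x.1) = (if T y % 2 = 0 then y.2 else y.1) :=
  congrArg (fun z => (ofLex z).2) h

lemma key_injOn {kap lam : YoungDiagram} {T : ℕ × ℕ → ℕ} (hT : IsSuperSkew kap lam T) :
    Set.InjOn (key T) (skewCells kap lam) := by
  rintro ⟨i1, j1⟩ hx ⟨i2, j2⟩ hy h
  have hv : T (i1, j1) = T (i2, j2) := key_fst h
  have ht := key_snd h
  obtain ⟨-, -, -, -, hrowP, hcolP⟩ := hT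
  by_cases hpar : T (i1, j1) % 2 = 0
  · rw [if_pos hpar, if_pos (hv ▸ hpar)] at ht
    simp only at ht
    subst ht
    rcases lt_trichotomy i1 i2 with hlt | heq | hgt
    · have := hcolP i1 i2 j1 hlt hx hy hv
      omega
    · rw [heq]
    · have := hcolP i2 i1 j1 hgt hy hx hv.symm
      omega
  · rw [if_neg hpar, if_neg (fun hc => hpar (hv ▸ hc))] at ht
    simp only at ht
    subst ht
    rcases lt_trichotomy j1 j2 with hlt | heq | hgt
    · have := hrowP i1 j1 j2 hlt hx hy hv
      omega
    · rw [heq]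
    · have := hrowP i1 j2 j1 hgt hy hx hv.symm
      omega

end Aux


section Rank

variable (kap lam : YoungDiagram) (n : ℕ)

noncomputable def stdOf (T : ℕ × ℕ → ℕ) (x : ℕ × ℕ) : ℕ :=
  if x ∈ cellsF kap lam then
    1 + ((cellsF kap lam).filter (fun y => key T y < key T x)).card
  else 0

lemma stdOf_zero (T : ℕ × ℕ → ℕ) {x : ℕ × ℕ} (hx : x ∉ skewCells kap lam) :
    stdOf kap lam T x = 0 := by
  rw [stdOf, if_neg (fun hc => hx ((mem_skew_iff kap lam x).2 hc))]

lemma stdOf_lt (T : ℕ × ℕ → ℕ) {x y : ℕ × ℕ} (hx : x ∈ skewCells kap lam)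
    (hy : y ∈ skewCells kap lam) (h : key T x < key T y) :
    stdOf kap lam T x < stdOf kap lam T y := by
  rw [stdOf, stdOf, if_pos ((mem_skew_iff kap lam x).1 hx),
    if_pos ((mem_skew_iff kap lam y).1 hy)]
  have hss : (cellsF kap lam).filter (fun z => key T z < key T x) ⊂
      (cellsF kap lam).filter (fun z => key T z < key T y) := by
    constructor
    · intro z hz
      rw [Finset.mem_filter] at hz ⊢
      exact ⟨hz.1, hz.2.trans h⟩
    · intro hcon
      have hxmem : x ∈ (cellsF kap lam).filter (fun z => key T z < key T y) :=
        Finset.mem_filter.2 ⟨(mem_skew_iff kap lam x).1 hx, h⟩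
      have := Finset.mem_filter.1 (hcon hxmem)
      exact lt_irrefl _ this.2
  have := Finset.card_lt_card hss
  omega

lemma stdOf_mem_Icc (hn : (cellsF kap lam).card = n) (T : ℕ × ℕ → ℕ) {x : ℕ × ℕ}
    (hx : x ∈ skewCells kap lam) : stdOf kap lam T x ∈ Set.Icc 1 n := by
  have hx' := (mem_skew_iff kap lam x).1 hx
  rw [stdOf, if_pos hx']
  have hsub : (cellsF kap lam).filter (fun y => key T y < key T x) ⊆
      (cellsF kap lam).erase x := by
    intro z hz
    rw [Finset.mem_filter] at hz
    refine Finset.mem_erase.2 ⟨?_, hz.1⟩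
    rintro rfl
    exact lt_irrefl _ hz.2
  have h1 := Finset.card_le_card hsub
  have h2 : ((cellsF kap lam).erase x).card = (cellsF kap lam).card - 1 :=
    Finset.card_erase_of_mem hx'
  have h3 : 1 ≤ (cellsF kap lam).card := Finset.card_pos.2 ⟨x, hx'⟩
  rw [Set.mem_Icc]
  omega

lemma stdOf_injOn {T : ℕ × ℕ → ℕ} (hT : IsSuperSkew kap lam T) :
    Set.InjOn (stdOf kap lam T) (skewCells kap lam) := by
  intro x hx y hy h
  rcases lt_trichotomy (key T x) (key T y) with h' | h' | h'
  · have := stdOf_lt kap lam T hx hy h'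
    omega
  · exact key_injOn hT hx hy h'
  · have := stdOf_lt kap lam T hy hx h'
    omega

lemma stdOf_surj (hn : (cellsF kap lam).card = n) {T : ℕ × ℕ → ℕ}
    (hT : IsSuperSkew kap lam T) {m : ℕ} (hm : m ∈ Set.Icc 1 n) :
    ∃ x ∈ skewCells kap lam, stdOf kap lam T x = m := by
  have hsurj := Finset.surj_on_of_inj_on_of_card_le (s := cellsF kap lam)
    (t := Finset.Icc 1 n) (fun a _ => stdOf kap lam T a)
    (fun a ha => by
      have := stdOf_mem_Icc kap lam n hn T ((mem_skew_iff kap lam a).2 ha)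
      rw [Set.mem_Icc] at this
      exact Finset.mem_Icc.2 this)
    (fun a₁ a₂ ha₁ ha₂ he => stdOf_injOn kap lam hT
      ((mem_skew_iff kap lam a₁).2 ha₁) ((mem_skew_iff kap lam a₂).2 ha₂) he)
    (by rw [hn, Nat.card_Icc]; omega)
  rw [Set.mem_Icc] at hm
  obtain ⟨a, ha, hae⟩ := hsurj m (Finset.mem_Icc.2 hm)
  exact ⟨a, (mem_skew_iff kap lam a).2 ha, hae.symm⟩

lemma stdOf_bijOn (hn : (cellsF kap lam).card = n) {T : ℕ × ℕ → ℕ}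
    (hT : IsSuperSkew kap lam T) :
    Set.BijOn (stdOf kap lam T) (skewCells kap lam) (Set.Icc 1 n) := by
  refine ⟨fun x hx => stdOf_mem_Icc kap lam n hn T hx, stdOf_injOn kap lam hT, ?_⟩
  intro m hm
  obtain ⟨x, hx, he⟩ := stdOf_surj kap lam n hn hT hm
  exact ⟨x, hx, he⟩

lemma key_row_lt {T : ℕ × ℕ → ℕ} (hT : IsSuperSkew kap lam T) {i j1 j2 : ℕ} (h : j1 < j2)
    (hx : (i, j1) ∈ skewCells kap lam) (hy : (i, j2) ∈ skewCells kap lam) :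
    key T (i, j1) < key T (i, j2) := by
  have hle := hT.2.2.1 i j1 j2 h.le hx hy
  rcases lt_or_eq_of_le hle with h' | h'
  · exact key_lt_of_lt h'
  · have heven := hT.2.2.2.2.1 i j1 j2 h hx hy h'
    rw [key, key, Prod.Lex.lt_iff]
    refine Or.inr ⟨h', ?_⟩
    simp only [if_pos heven, if_pos (h' ▸ heven)]
    exact h

lemma key_col_lt {T : ℕ × ℕ → ℕ} (hT : IsSuperSkew kap lam T) {i1 i2 j : ℕ} (h : i1 < i2)
    (hx : (i1, j) ∈ skewCells kap lam) (hy : (i2, j) ∈ skewCells kap lam) :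
    key T (i1, j) < key T (i2, j) := by
  have hle := hT.2.2.2.1 i1 i2 j h.le hx hy
  rcases lt_or_eq_of_le hle with h' | h'
  · exact key_lt_of_lt h'
  · have hodd := hT.2.2.2.2.2 i1 i2 j h hx hy h'
    rw [key, key, Prod.Lex.lt_iff]
    refine Or.inr ⟨h', ?_⟩
    simp only [if_neg (by omega : ¬ T (i1, j) % 2 = 0),
      if_neg (by omega : ¬ T (i2, j) % 2 = 0)]
    exact h

lemma std_isStd (hn : (cellsF kap lam).card = n) {T : ℕ × ℕ → ℕ}
    (hT : IsSuperSkew kap lam T) : IsStdSkew kap lam n (stdOf kap lam T) := by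
  refine ⟨fun x hx => stdOf_zero kap lam T hx, stdOf_bijOn kap lam n hn hT, ?_, ?_⟩
  · intro i j1 j2 h hx hy
    exact stdOf_lt kap lam T hx hy (key_row_lt kap lam hT h hx hy)
  · intro i1 i2 j h hx hy
    exact stdOf_lt kap lam T hx hy (key_col_lt kap lam hT h hx hy)

end Rank


section Psi

def extw (n : ℕ) (a : Fin n → ℕ) (m : ℕ) : ℕ := if h : m < n then a ⟨m, h⟩ else 0

def psi (kap lam : YoungDiagram) (n : ℕ) (p : (ℕ × ℕ → ℕ) × (Fin n → ℕ)) : ℕ × ℕ → ℕ :=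
  fun x => if x ∈ cellsF kap lam then extw n p.2 (p.1 x - 1) else 0

variable (kap lam : YoungDiagram) (n : ℕ) (S : ℕ × ℕ → ℕ) (a : Fin n → ℕ)

lemma psi_zero {x : ℕ × ℕ} (hx : x ∉ skewCells kap lam) : psi kap lam n (S, a) x = 0 :=
  if_neg (fun hc => hx ((mem_skew_iff kap lam x).2 hc))

lemma psi_val (hstd : IsStdSkew kap lam n S) {x : ℕ × ℕ} (hx : x ∈ skewCells kap lam) :
    ∃ h : S x - 1 < n, psi kap lam n (S, a) x = a ⟨S x - 1, h⟩ := by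
  have hb := Set.mem_Icc.1 (hstd.2.1.1 hx)
  have h : S x - 1 < n := by omega
  refine ⟨h, ?_⟩
  rw [psi, if_pos ((mem_skew_iff kap lam x).1 hx), extw, dif_pos h]

lemma psi_mono (hstd : IsStdSkew kap lam n S) (ha : Monotone a) {x y : ℕ × ℕ}
    (hx : x ∈ skewCells kap lam) (hy : y ∈ skewCells kap lam) (h : S x ≤ S y) :
    psi kap lam n (S, a) x ≤ psi kap lam n (S, a) y := by
  obtain ⟨h1, e1⟩ := psi_val kap lam n S a hstd hx
  obtain ⟨h2, e2⟩ := psi_val kap lam n S a hstd hy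
  rw [e1, e2]
  exact ha (Fin.mk_le_mk.2 (by omega))

lemma chain (hstd : IsStdSkew kap lam n S) (hw : IsSuperWord n (descSkew kap lam S) a) :
    ∀ d : ℕ, ∀ x y : ℕ × ℕ, x ∈ skewCells kap lam → y ∈ skewCells kap lam →
      S y = S x + d + 1 → psi kap lam n (S, a) x = psi kap lam n (S, a) y →
      (psi kap lam n (S, a) x % 2 = 0 → x.2 < y.2) ∧
      (psi kap lam n (S, a) x % 2 = 1 → y.2 ≤ x.2) := by
  intro d
  induction d using Nat.strong_induction_on with
  | _ d IH =>
  intro x y hx hy hSy hval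
  have hxb := Set.mem_Icc.1 (hstd.2.1.1 hx)
  have hyb := Set.mem_Icc.1 (hstd.2.1.1 hy)
  cases d with
  | zero =>
    have h1 : S x - 1 < n := by omega
    have h2 : S x - 1 + 1 < n := by omega
    obtain ⟨h1', e1⟩ := psi_val kap lam n S a hstd hx
    obtain ⟨h2', e2⟩ := psi_val kap lam n S a hstd hy
    have efin : (⟨S y - 1, h2'⟩ : Fin n) = ⟨S x - 1 + 1, h2⟩ := Fin.mk_eq_mk.2 (by omega)
    have hcond := hw.2.2 (S x - 1) h1 h2
      ((e1.symm.trans (hval.trans e2)).trans (congrArg a efin))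
    have ekk : S x - 1 + 1 = S x := by omega
    rw [ekk] at hcond
    constructor
    · intro hpar
      have hD := hcond.1 (by rw [← e1]; exact hpar)
      by_contra hc
      push_neg at hc
      exact hD ⟨x, y, hx, hy, rfl, by omega, hc⟩
    · intro hpar
      obtain ⟨u, w, hu, hw', hSu, hSw, hcol⟩ := hcond.2 (by rw [← e1]; exact hpar)
      have hux : u = x := hstd.2.1.2.1 hu hx (by omega)
      have hwy : w = y := hstd.2.1.2.1 hw' hy (by omega)
      rw [hux, hwy] at hcol
      exact hcol
  | succ e =>
    have hzmem : (S x + e + 1) ∈ S '' (skewCells kap lam) :=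
      hstd.2.1.2.2 (Set.mem_Icc.2 ⟨by omega, by omega⟩)
    obtain ⟨z, hzm, hSz⟩ := hzmem
    have hxz : psi kap lam n (S, a) x ≤ psi kap lam n (S, a) z :=
      psi_mono kap lam n S a hstd hw.2.1 hx hzm (by omega)
    have hzy : psi kap lam n (S, a) z ≤ psi kap lam n (S, a) y :=
      psi_mono kap lam n S a hstd hw.2.1 hzm hy (by omega)
    have hxz' : psi kap lam n (S, a) x = psi kap lam n (S, a) z := by omega
    have c1 := IH e (by omega) x z hx hzm (by omega) hxz'
    have c2 := IH 0 (by omega) z y hzm hy (by omega) (by omega)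
    constructor
    · intro hp
      exact (c1.1 hp).trans (c2.1 (by omega))
    · intro hp
      exact (c2.2 (by omega)).trans (c1.2 hp)

lemma psi_super (hstd : IsStdSkew kap lam n S) (hw : IsSuperWord n (descSkew kap lam S) a) :
    IsSuperSkew kap lam (psi kap lam n (S, a)) := by
  refine ⟨fun x hx => psi_zero kap lam n S a hx, ?_, ?_, ?_, ?_, ?_⟩
  · intro x hx
    obtain ⟨h, e⟩ := psi_val kap lam n S a hstd hx
    rw [e]
    exact hw.1 _
  · intro i j1 j2 hj hx hy
    rcases eq_or_lt_of_le hj with rfl | hj'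
    · exact le_rfl
    · exact psi_mono kap lam n S a hstd hw.2.1 hx hy (hstd.2.2.1 i j1 j2 hj' hx hy).le
  · intro i1 i2 j hi hx hy
    rcases eq_or_lt_of_le hi with rfl | hi'
    · exact le_rfl
    · exact psi_mono kap lam n S a hstd hw.2.1 hx hy (hstd.2.2.2 i1 i2 j hi' hx hy).le
  · intro i j1 j2 hj hx hy he
    have hS := hstd.2.2.1 i j1 j2 hj hx hy
    have hc := chain kap lam n S a hstd hw (S (i, j2) - S (i, j1) - 1) (i, j1) (i, j2)
      hx hy (by omega) he
    by_contra hpar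
    have h2 : j2 ≤ j1 := hc.2 (by omega)
    omega
  · intro i1 i2 j hi hx hy he
    have hS := hstd.2.2.2 i1 i2 j hi hx hy
    have hc := chain kap lam n S a hstd hw (S (i2, j) - S (i1, j) - 1) (i1, j) (i2, j)
      hx hy (by omega) he
    by_contra hpar
    have h2 : j < j := hc.1 (by omega)
    omega

lemma psi_strict (hstd : IsStdSkew kap lam n S) (hw : IsSuperWord n (descSkew kap lam S) a)
    {x y : ℕ × ℕ} (hx : x ∈ skewCells kap lam) (hy : y ∈ skewCells kap lam)
    (h : key (psi kap lam n (S, a)) x < key (psi kap lam n (S, a)) y) : S x < S y := by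
  have hsup := psi_super kap lam n S a hstd hw
  have hne : x ≠ y := fun e => by rw [e] at h; exact lt_irrefl _ h
  have hSne : S x ≠ S y := fun e => hne (hstd.2.1.2.1 hx hy e)
  rcases lt_or_gt_of_ne hSne with hlt | hgt
  · exact hlt
  exfalso
  obtain ⟨x1, x2⟩ := x
  obtain ⟨y1, y2⟩ := y
  have hTle : psi kap lam n (S, a) (y1, y2) ≤ psi kap lam n (S, a) (x1, x2) :=
    psi_mono kap lam n S a hstd hw.2.1 hy hx hgt.le
  rw [key, key, Prod.Lex.lt_iff] at h
  rcases h with h | ⟨heq, htb⟩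
  · have h' : psi kap lam n (S, a) (x1, x2) < psi kap lam n (S, a) (y1, y2) := h
    omega
  · have heq' : psi kap lam n (S, a) (x1, x2) = psi kap lam n (S, a) (y1, y2) := heq
    obtain ⟨d, hd⟩ : ∃ d, S (x1, x2) = S (y1, y2) + d + 1 := ⟨S (x1, x2) - S (y1, y2) - 1, by omega⟩
    have hc := chain kap lam n S a hstd hw d (y1, y2) (x1, x2) hy hx hd heq'.symm
    by_cases hpar : psi kap lam n (S, a) (x1, x2) % 2 = 0
    · have h1 : x2 < y2 := by
        have := htb
        rw [if_pos hpar, if_pos (by omega : psi kap lam n (S, a) (y1, y2) % 2 = 0)] at this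
        exact this
      have h2 : y2 < x2 := hc.1 (by omega)
      omega
    · have h1 : x1 < y1 := by
        have := htb
        rw [if_neg hpar, if_neg (by omega : ¬ psi kap lam n (S, a) (y1, y2) % 2 = 0)] at this
        exact this
      have h2 : x2 ≤ y2 := hc.2 (by omega)
      rcases eq_or_lt_of_le h2 with he2 | hlt2
      · subst he2
        have := hstd.2.2.2 x1 y1 x2 h1 hx hy
        omega
      · have := super_strict hsup hx hy h1 hlt2
        omega

end Psi


section Unique

variable (kap lam : YoungDiagram) (n : ℕ) (S : ℕ × ℕ → ℕ) (a : Fin n → ℕ)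

noncomputable def wordOf (T : ℕ × ℕ → ℕ) : Fin n → ℕ :=
  fun k => T (Function.invFunOn (stdOf kap lam T) (skewCells kap lam) (k.1 + 1))

lemma sigma_spec (hn : (cellsF kap lam).card = n) {T : ℕ × ℕ → ℕ}
    (hT : IsSuperSkew kap lam T) {m : ℕ} (hm : m ∈ Set.Icc 1 n) :
    Function.invFunOn (stdOf kap lam T) (skewCells kap lam) m ∈ skewCells kap lam ∧
    stdOf kap lam T (Function.invFunOn (stdOf kap lam T) (skewCells kap lam) m) = m := by
  have hex : ∃ x ∈ skewCells kap lam, stdOf kap lam T x = m := stdOf_surj kap lam n hn hT hm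
  exact ⟨Function.invFunOn_mem hex, Function.invFunOn_eq hex⟩

lemma key_lt_sigma (hn : (cellsF kap lam).card = n) {T : ℕ × ℕ → ℕ}
    (hT : IsSuperSkew kap lam T) {x y : ℕ × ℕ} (hx : x ∈ skewCells kap lam)
    (hy : y ∈ skewCells kap lam) (h : stdOf kap lam T x < stdOf kap lam T y) :
    key T x < key T y := by
  rcases lt_trichotomy (key T x) (key T y) with h' | h' | h'
  · exact h'
  · exfalso
    have := key_injOn hT hx hy h'
    rw [this] at h
    omega
  · exfalso
    have := stdOf_lt kap lam T hy hx h'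
    omega

lemma word_isWord (hn : (cellsF kap lam).card = n) {T : ℕ × ℕ → ℕ}
    (hT : IsSuperSkew kap lam T) :
    IsSuperWord n (descSkew kap lam (stdOf kap lam T)) (wordOf kap lam n T) := by
  refine ⟨?_, ?_, ?_⟩
  · intro i
    have hi := i.isLt
    have hs := sigma_spec kap lam n hn hT (m := i.1 + 1) (Set.mem_Icc.2 ⟨by omega, by omega⟩)
    exact hT.2.1 _ hs.1
  · intro i j hij
    rcases eq_or_lt_of_le hij with rfl | hlt
    · exact le_rfl
    · have hi := i.isLt
      have hj := j.isLt
      have hsi := sigma_spec kap lam n hn hT (m := i.1 + 1) (Set.mem_Icc.2 ⟨by omega, by omega⟩)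
      have hsj := sigma_spec kap lam n hn hT (m := j.1 + 1) (Set.mem_Icc.2 ⟨by omega, by omega⟩)
      have hlt' : i.1 + 1 < j.1 + 1 := by
        have := Fin.lt_iff_val_lt_val.1 hlt
        omega
      have hk : key T (Function.invFunOn (stdOf kap lam T) (skewCells kap lam) (i.1 + 1)) <
          key T (Function.invFunOn (stdOf kap lam T) (skewCells kap lam) (j.1 + 1)) :=
        key_lt_sigma kap lam n hn hT hsi.1 hsj.1 (by rw [hsi.2, hsj.2]; exact hlt')
      exact val_le_of_key_le hk.le
  · intro k h1 h2 heq
    have hsx := sigma_spec kap lam n hn hT (m := k + 1) (Set.mem_Icc.2 ⟨by omega, by omega⟩)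
    have hsy := sigma_spec kap lam n hn hT (m := k + 1 + 1) (Set.mem_Icc.2 ⟨by omega, by omega⟩)
    set x := Function.invFunOn (stdOf kap lam T) (skewCells kap lam) (k + 1) with hxdef
    set y := Function.invFunOn (stdOf kap lam T) (skewCells kap lam) (k + 1 + 1) with hydef
    have heq' : T x = T y := heq
    have hk : key T x < key T y :=
      key_lt_sigma kap lam n hn hT hsx.1 hsy.1 (by rw [hsx.2, hsy.2]; omega)
    rw [key, key, Prod.Lex.lt_iff] at hk
    rcases hk with hk | ⟨-, htb⟩
    · exfalso
      have : T x < T y := hk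
      omega
    constructor
    · intro hpar
      have hpar' : T x % 2 = 0 := hpar
      intro hD
      obtain ⟨u, w, hu, hw', hSu, hSw, hcol⟩ := hD
      have hux : u = x := stdOf_injOn kap lam hT hu hsx.1 (by rw [hSu, hsx.2])
      have hwy : w = y := stdOf_injOn kap lam hT hw' hsy.1 (by rw [hSw, hsy.2])
      rw [hux, hwy] at hcol
      have htb' : x.2 < y.2 := by
        rw [if_pos hpar', if_pos (by omega : T y % 2 = 0)] at htb
        exact htb
      omega
    · intro hpar
      have hpar' : T x % 2 = 1 := hpar
      have htb' : x.1 < y.1 := by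
        rw [if_neg (by omega : ¬ T x % 2 = 0), if_neg (by omega : ¬ T y % 2 = 0)] at htb
        exact htb
      have hc2 : y.2 ≤ x.2 := by
        by_contra hc
        push_neg at hc
        have := super_strict hT hsx.1 hsy.1 htb' hc
        omega
      exact ⟨x, y, hsx.1, hsy.1, hsx.2, hsy.2, hc2⟩

lemma psi_phi (hn : (cellsF kap lam).card = n) {T : ℕ × ℕ → ℕ}
    (hT : IsSuperSkew kap lam T) :
    psi kap lam n (stdOf kap lam T, wordOf kap lam n T) = T := by
  funext x
  by_cases hx : x ∈ skewCells kap lam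
  · have hstd := std_isStd kap lam n hn hT
    obtain ⟨h, e⟩ := psi_val kap lam n (stdOf kap lam T) (wordOf kap lam n T) hstd hx
    rw [e]
    have hb := Set.mem_Icc.1 (hstd.2.1.1 hx)
    show T (Function.invFunOn (stdOf kap lam T) (skewCells kap lam)
      (stdOf kap lam T x - 1 + 1)) = T x
    have ek : stdOf kap lam T x - 1 + 1 = stdOf kap lam T x := by omega
    rw [ek]
    have hs := sigma_spec kap lam n hn hT (hstd.2.1.1 hx)
    rw [stdOf_injOn kap lam hT hs.1 hx hs.2]
  · rw [psi_zero kap lam n _ _ hx, hT.1 x hx]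

lemma std_eq_stdOf (hn : (cellsF kap lam).card = n) (hstd : IsStdSkew kap lam n S)
    (hw : IsSuperWord n (descSkew kap lam S) a) :
    S = stdOf kap lam (psi kap lam n (S, a)) := by
  set T := psi kap lam n (S, a) with hTdef
  have hsup := psi_super kap lam n S a hstd hw
  funext x
  by_cases hx : x ∈ skewCells kap lam
  · rw [stdOf, if_pos ((mem_skew_iff kap lam x).1 hx)]
    have hb := Set.mem_Icc.1 (hstd.2.1.1 hx)
    have hF : (cellsF kap lam).filter (fun y => key T y < key T x) =
        (cellsF kap lam).filter (fun y => S y < S x) := by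
      ext y
      simp only [Finset.mem_filter, and_congr_right_iff]
      intro hy
      have hy' := (mem_skew_iff kap lam y).2 hy
      constructor
      · exact fun h => psi_strict kap lam n S a hstd hw hy' hx h
      · intro h
        rcases lt_trichotomy (key T y) (key T x) with h' | h' | h'
        · exact h'
        · exfalso
          have he := key_injOn hsup hy' hx h'
          rw [he] at h
          omega
        · exfalso
          have := psi_strict kap lam n S a hstd hw hx hy' h'
          omega
    rw [hF]
    have hinj : Set.InjOn S ((cellsF kap lam).filter (fun y => S y < S x) : Finset (ℕ × ℕ)) := by
      intro u hu v hv he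
      simp only [Finset.coe_filter, Set.mem_setOf_eq] at hu hv
      exact hstd.2.1.2.1 ((mem_skew_iff kap lam u).2 hu.1) ((mem_skew_iff kap lam v).2 hv.1) he
    have himg : ((cellsF kap lam).filter (fun y => S y < S x)).image S = Finset.Ico 1 (S x) := by
      ext m
      simp only [Finset.mem_image, Finset.mem_filter, Finset.mem_Ico]
      constructor
      · rintro ⟨y, ⟨hy, hlt⟩, rfl⟩
        have hb2 := Set.mem_Icc.1 (hstd.2.1.1 ((mem_skew_iff kap lam y).2 hy))
        exact ⟨hb2.1, hlt⟩
      · rintro ⟨h1, h2⟩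
        obtain ⟨y, hy, rfl⟩ := hstd.2.1.2.2 (Set.mem_Icc.2 ⟨h1, by omega⟩)
        exact ⟨y, ⟨(mem_skew_iff kap lam y).1 hy, h2⟩, rfl⟩
    have hcard := Finset.card_image_of_injOn hinj
    rw [himg, Nat.card_Ico] at hcard
    omega
  · rw [hstd.1 x hx, stdOf_zero kap lam T hx]

lemma word_eq (hn : (cellsF kap lam).card = n) (hstd : IsStdSkew kap lam n S)
    (hw : IsSuperWord n (descSkew kap lam S) a) (k : Fin n) :
    a k = wordOf kap lam n (psi kap lam n (S, a)) k := by
  have hsup := psi_super kap lam n S a hstd hw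
  have hse := std_eq_stdOf kap lam n S a hn hstd hw
  have hk := k.isLt
  have hs := sigma_spec kap lam n hn hsup (m := k.1 + 1) (Set.mem_Icc.2 ⟨by omega, by omega⟩)
  show a k = psi kap lam n (S, a) (Function.invFunOn
    (stdOf kap lam (psi kap lam n (S, a))) (skewCells kap lam) (k.1 + 1))
  obtain ⟨h, e⟩ := psi_val kap lam n S a hstd hs.1
  rw [e]
  have hS : S (Function.invFunOn
      (stdOf kap lam (psi kap lam n (S, a))) (skewCells kap lam) (k.1 + 1)) = k.1 + 1 :=
    (congrFun hse _).trans hs.2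
  congr 1
  apply Fin.ext
  simp only [hS]
  omega

lemma ncard_eq_of_bijOn {α β : Type*} {s : Set α} {t : Set β} {f : α → β}
    (h : Set.BijOn f s t) : s.ncard = t.ncard := by
  rw [← h.image_eq, Set.ncard_image_of_injOn h.injOn]

lemma psi_content (hstd : IsStdSkew kap lam n S) (v : ℕ) :
    Set.ncard {x : ℕ × ℕ | x ∈ skewCells kap lam ∧ psi kap lam n (S, a) x = v} =
    Set.ncard {i : Fin n | a i = v} := by
  have hsig : ∀ m ∈ Set.Icc 1 n,
      Function.invFunOn S (skewCells kap lam) m ∈ skewCells kap lam ∧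
      S (Function.invFunOn S (skewCells kap lam) m) = m := by
    intro m hm
    obtain ⟨y, hy, he⟩ := hstd.2.1.2.2 hm
    have hex : ∃ x ∈ skewCells kap lam, S x = m := ⟨y, hy, he⟩
    exact ⟨Function.invFunOn_mem hex, Function.invFunOn_eq hex⟩
  symm
  apply ncard_eq_of_bijOn (f := fun i : Fin n => Function.invFunOn S (skewCells kap lam) (i.1 + 1))
  refine ⟨?_, ?_, ?_⟩
  · intro i hi
    have hilt := i.isLt
    have hs := hsig (i.1 + 1) (Set.mem_Icc.2 ⟨by omega, by omega⟩)
    refine ⟨hs.1, ?_⟩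
    obtain ⟨h, e⟩ := psi_val kap lam n S a hstd hs.1
    rw [e]
    have hfin : (⟨S (Function.invFunOn S (skewCells kap lam) (i.1 + 1)) - 1, h⟩ : Fin n) = i := by
      apply Fin.ext
      simp only [hs.2]
      omega
    rw [hfin]
    exact hi
  · intro i hi j hj he
    have hilt := i.isLt
    have hjlt := j.isLt
    have hsi := hsig (i.1 + 1) (Set.mem_Icc.2 ⟨by omega, by omega⟩)
    have hsj := hsig (j.1 + 1) (Set.mem_Icc.2 ⟨by omega, by omega⟩)
    apply Fin.ext
    have he' : Function.invFunOn S (skewCells kap lam) (i.1 + 1) =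
        Function.invFunOn S (skewCells kap lam) (j.1 + 1) := he
    have : i.1 + 1 = j.1 + 1 := by rw [← hsi.2, ← hsj.2, he']
    omega
  · intro x hx
    obtain ⟨h, e⟩ := psi_val kap lam n S a hstd hx.1
    have hb := Set.mem_Icc.1 (hstd.2.1.1 hx.1)
    refine ⟨⟨S x - 1, h⟩, ?_, ?_⟩
    · show a ⟨S x - 1, h⟩ = v
      rw [← e]
      exact hx.2
    · show Function.invFunOn S (skewCells kap lam) (S x - 1 + 1) = x
      have ek : S x - 1 + 1 = S x := by omega
      rw [ek]
      have hs := hsig (S x) (hstd.2.1.1 hx.1)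
      exact hstd.2.1.2.1 hs.1 hx.1 hs.2

end Unique

/-- The expansion of the super Schur function into super quasisymmetric
functions: `Σ_{T super of shape λ/κ} z^T = Σ_{S ∈ SYT(λ/κ)} Q̃_{n,d(S)}(z,w)`,
stated coefficientwise: for every content `(c, c')` (with `c b` the exponent of
`z_{b+1}` and `c' b` the exponent of `w_{b+1}`), the number of super tableaux of
content `(c, c')` equals the number of pairs of a standard tableau `S` and a
monomial word of `Q̃_{n, d(S)}` of content `(c, c')`. -/
theorem statement2 (kap lam : YoungDiagram) (hsub : kap.cells ⊆ lam.cells)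
    (n : ℕ) (hn : (lam.cells \ kap.cells).card = n) (c c' : ℕ → ℕ) :
    Set.ncard {T : ℕ × ℕ → ℕ | IsSuperSkew kap lam T ∧
      (∀ b : ℕ, Set.ncard {x : ℕ × ℕ | x ∈ skewCells kap lam ∧
        T x = 2 * (b + 1)} = c b) ∧
      (∀ b : ℕ, Set.ncard {x : ℕ × ℕ | x ∈ skewCells kap lam ∧
        T x = 2 * (b + 1) + 1} = c' b)} =
    Set.ncard {p : (ℕ × ℕ → ℕ) × (Fin n → ℕ) |
      IsStdSkew kap lam n p.1 ∧ IsSuperWord n (descSkew kap lam p.1) p.2 ∧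
      (∀ b : ℕ, Set.ncard {i : Fin n | p.2 i = 2 * (b + 1)} = c b) ∧
      (∀ b : ℕ, Set.ncard {i : Fin n | p.2 i = 2 * (b + 1) + 1} = c' b)} := by

  have hn' : (cellsF kap lam).card = n := hn
  have hbij : Set.BijOn (psi kap lam n)
      {p : (ℕ × ℕ → ℕ) × (Fin n → ℕ) | IsStdSkew kap lam n p.1 ∧
        IsSuperWord n (descSkew kap lam p.1) p.2 ∧
        (∀ b : ℕ, Set.ncard {i : Fin n | p.2 i = 2 * (b + 1)} = c b) ∧
        (∀ b : ℕ, Set.ncard {i : Fin n | p.2 i = 2 * (b + 1) + 1} = c' b)}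
      {T : ℕ × ℕ → ℕ | IsSuperSkew kap lam T ∧
        (∀ b : ℕ, Set.ncard {x : ℕ × ℕ | x ∈ skewCells kap lam ∧
          T x = 2 * (b + 1)} = c b) ∧
        (∀ b : ℕ, Set.ncard {x : ℕ × ℕ | x ∈ skewCells kap lam ∧
          T x = 2 * (b + 1) + 1} = c' b)} := by
    refine ⟨?_, ?_, ?_⟩
    · rintro ⟨S, a⟩ ⟨hstd, hw, hc1, hc2⟩
      refine ⟨psi_super kap lam n S a hstd hw, ?_, ?_⟩
      · intro b
        exact (psi_content kap lam n S a hstd (2 * (b + 1))).trans (hc1 b)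
      · intro b
        exact (psi_content kap lam n S a hstd (2 * (b + 1) + 1)).trans (hc2 b)
    · rintro ⟨S1, a1⟩ ⟨hstd1, hw1, -, -⟩ ⟨S2, a2⟩ ⟨hstd2, hw2, -, -⟩ he
      have hS : S1 = S2 := by
        rw [std_eq_stdOf kap lam n S1 a1 hn' hstd1 hw1,
          std_eq_stdOf kap lam n S2 a2 hn' hstd2 hw2, he]
      have hA : a1 = a2 := by
        funext k
        rw [word_eq kap lam n S1 a1 hn' hstd1 hw1 k,
          word_eq kap lam n S2 a2 hn' hstd2 hw2 k, he]
      simp only [Prod.mk.injEq]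
      exact ⟨hS, hA⟩
    · intro T hT
      obtain ⟨hsup, hc1, hc2⟩ := hT
      have hphi := psi_phi kap lam n hn' hsup
      have hstd := std_isStd kap lam n hn' hsup
      refine ⟨(stdOf kap lam T, wordOf kap lam n T), ⟨hstd,
        word_isWord kap lam n hn' hsup, ?_, ?_⟩, hphi⟩
      · intro b
        rw [← psi_content kap lam n (stdOf kap lam T) (wordOf kap lam n T) hstd
          (2 * (b + 1)), hphi]
        exact hc1 b
      · intro b
        rw [← psi_content kap lam n (stdOf kap lam T) (wordOf kap lam n T) hstd
          (2 * (b + 1) + 1), hphi]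
        exact hc2 b
  exact (ncard_eq_of_bijOn hbij).symm


end HHL
end

section
/- For every partition λ ⊆ δ_n, Σ_{T a super tableau of shape (λ+(1^n))/λ} q^{dinv(T)} z^T = Σ_{S a standard tableau of shape (λ+(1^n))/λ} q^{dinv(S)} Q̃_{n, dd(S)}(z, w), as formal power series in z and w with coefficients in ℕ[q]. -/
open Classical

namespace HHL

/-- `d_m` of a cell `(i, j)` is `m*i + j`. -/
def dm (m : ℕ) (x : ℕ × ℕ) : ℕ := m * x.1 + x.2

/-- The reverse diagonal lexicographic order `x <_d y`. -/
def dLess (m : ℕ) (x y : ℕ × ℕ) : Prop :=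
  dm m y < dm m x ∨ (dm m x = dm m y ∧ x.2 < y.2)

/-- The number of d-inversions contributed by a pair of entries with the smaller
entry at the cell `x = (i,j)` and the larger entry at the cell `y = (i',j')`:
`max (0, m - |d_m(y) - d_m(x)|)` if `j > j'`, and
`max (0, m - |d_m(y) - d_m(x) - 1|)` if `j < j'`. -/
def contrib (m : ℕ) (x y : ℕ × ℕ) : ℕ :=
  if y.2 < x.2 then ((m : ℤ) - |(dm m y : ℤ) - (dm m x : ℤ)|).toNat
  else if x.2 < y.2 then ((m : ℤ) - |(dm m y : ℤ) - (dm m x : ℤ) - 1|).toNat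
  else 0

/-- `lam` is (the row-length function of) a partition with at most `n` parts whose
Young diagram is contained in the staircase `m·δ_n = (m(n-1), m(n-2), …, m, 0)`. -/
def IsShape (m n : ℕ) (lam : Fin n → ℕ) : Prop :=
  (∀ i j : Fin n, i ≤ j → lam j ≤ lam i) ∧
  ∀ i : Fin n, lam i ≤ m * (n - 1 - (i : ℕ))

/-- The cell `x_i = (i, λ_{i+1})` of the vertical strip `(λ+(1^n))/λ`. -/
def cell {n : ℕ} (lam : Fin n → ℕ) (i : Fin n) : ℕ × ℕ := ((i : ℕ), lam i)

/-- The cells `x_i` and `x_j` are (consecutive cells) in the same column. -/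
def SameCol {n : ℕ} (lam : Fin n → ℕ) (i j : Fin n) : Prop :=
  (i : ℕ) + 1 = (j : ℕ) ∧ lam i = lam j

/-- A semistandard tableau of the vertical strip `(λ+(1^n))/λ`: entries are
positive integers, strictly increasing up each column. -/
def IsSSYT {n : ℕ} (lam : Fin n → ℕ) (T : Fin n → ℕ) : Prop :=
  (∀ i, 1 ≤ T i) ∧ ∀ i j : Fin n, SameCol lam i j → T i < T j

/-- `T` has content `μ`: there are `μ_a` entries equal to `a` (the list `μ` is
indexed from `0`, so `μ.getD (a-1) 0` is the multiplicity of the letter `a ≥ 1`). -/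
def HasContent {n : ℕ} (T : Fin n → ℕ) (μ : List ℕ) : Prop :=
  ∀ a : ℕ, Set.ncard {i : Fin n | T i = a + 1} = μ.getD a 0

/-- An admissible ordered pair of cells `(x, y)`, `x = (i,j)`, `y = (i',j')`:
either (i) `d(y) = d(x)` and `j > j'`, or (ii) `d(y) = d(x) + 1` and `j < j'`. -/
def Admissible (x y : ℕ × ℕ) : Prop :=
  (y.1 + y.2 = x.1 + x.2 ∧ y.2 < x.2) ∨ (y.1 + y.2 = x.1 + x.2 + 1 ∧ x.2 < y.2)

/-- The number of d-inversions of a tableau of the vertical strip (`m = 1`):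
admissible pairs of cells `(x,y)` with `T(x) < T(y)`. -/
noncomputable def dinv {n : ℕ} (lam : Fin n → ℕ) (T : Fin n → ℕ) : ℕ :=
  Set.ncard {p : Fin n × Fin n |
    Admissible (cell lam p.1) (cell lam p.2) ∧ T p.1 < T p.2}

/-- The statistic `dinv_m` of a (semistandard) tableau of the vertical strip:
each pair of unequal entries contributes `contrib` with the smaller entry first;
each pair of equal entries contributes as would a pair of unequal entries with
the smaller entry at the `<_d`-smaller of the two cells. -/
noncomputable def dinvm (m : ℕ) {n : ℕ} (lam : Fin n → ℕ) (T : Fin n → ℕ) : ℕ :=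
  ∑ p : Fin n × Fin n,
    if T p.1 < T p.2 then contrib m (cell lam p.1) (cell lam p.2)
    else if T p.1 = T p.2 ∧ p.1 < p.2 then
      (if dLess m (cell lam p.1) (cell lam p.2) then
        contrib m (cell lam p.1) (cell lam p.2)
      else contrib m (cell lam p.2) (cell lam p.1))
    else 0

/-- A standard tableau of the vertical strip: a semistandard tableau which is a
bijection onto `{1, …, n}`. -/
def IsStandard {n : ℕ} (lam : Fin n → ℕ) (S : Fin n → ℕ) : Prop :=
  IsSSYT lam S ∧ Function.Injective S ∧ ∀ i, S i ≤ n

/-- The set of d-descents of a standard tableau `S`: letters `a` such that the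
cells `x`, `y` with `S(x) = a`, `S(y) = a + 1` satisfy `x >_d y`. -/
def ddSet (m : ℕ) {n : ℕ} (lam : Fin n → ℕ) (S : Fin n → ℕ) : Set ℕ :=
  {a | ∃ i j : Fin n, S i = a ∧ S j = a + 1 ∧ dLess m (cell lam j) (cell lam i)}


/-- The super alphabet `A± = {1 < 1̄ < 2 < 2̄ < ⋯}` is encoded by natural
numbers `≥ 2`: the positive letter `a` is `2a` and the negative letter `ā`
is `2a + 1` (so odd codes are the negative letters, and the usual order on
`ℕ` is the order of `A±`). -/
def IsNeg (a : ℕ) : Prop := a % 2 = 1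

/-- A super tableau of the vertical strip `(λ+(1^n))/λ`: entries in `A±`,
weakly increasing up each column with equal consecutive entries in a column
allowed only for negative letters. -/
def IsSuperStrip {n : ℕ} (lam : Fin n → ℕ) (T : Fin n → ℕ) : Prop :=
  (∀ i, 2 ≤ T i) ∧
  ∀ i j : Fin n, SameCol lam i j → (T i < T j ∨ (T i = T j ∧ T i % 2 = 1))

/-- The number of occurrences of the positive letter `b+1` in `T`. -/
noncomputable def zCont {n : ℕ} (T : Fin n → ℕ) (b : ℕ) : ℕ :=
  Set.ncard {i : Fin n | T i = 2 * (b + 1)}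

/-- The number of occurrences of the negative letter `(b+1)‾` in `T`. -/
noncomputable def wCont {n : ℕ} (T : Fin n → ℕ) (b : ℕ) : ℕ :=
  Set.ncard {i : Fin n | T i = 2 * (b + 1) + 1}

/-- Super `dinv` (`m = 1`): admissible pairs of cells `(x, y)` with
`T(x) < T(y)`, or `T(x) = T(y)` a negative letter. -/
noncomputable def sdinv {n : ℕ} (lam : Fin n → ℕ) (T : Fin n → ℕ) : ℕ :=
  Set.ncard {p : Fin n × Fin n |
    Admissible (cell lam p.1) (cell lam p.2) ∧
      (T p.1 < T p.2 ∨ (T p.1 = T p.2 ∧ T p.1 % 2 = 1))}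

/-!
Standardize a super tableau `T`: list its cells by entry, breaking ties between equal positive
letters in increasing `<_d` order and between equal negative letters in decreasing `<_d` order.
Labelling the cells by their rank gives a standard tableau `S`, and reading `T` in this order
gives a weakly increasing word. Every admissible pair and every pair of consecutive cells of a
column is `<_d`-decreasing, so on such pairs `S` compares exactly as the super order compares
`T`: hence `dinv S = dinv T`, and `S` is standard exactly when `T` is a super tableau. The
tie-breaking rule is the condition on equal consecutive letters of the word relative to `dd(S)`,
and a permutation that sorts an injective key is unique, so `T ↦ (S, word)` is a bijection.
-/

theorem dLess_asymm {m : ℕ} {x y : ℕ × ℕ} (h : dLess m x y) : ¬ dLess m y x := by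
  unfold dLess at *
  omega

theorem dLess_cell_total {m n : ℕ} (hm : 0 < m) (lam : Fin n → ℕ) {i j : Fin n} (hij : i ≠ j) :
    dLess m (cell lam i) (cell lam j) ∨ dLess m (cell lam j) (cell lam i) := by
  have hval : (i : ℕ) ≠ j := Fin.val_ne_of_ne hij
  unfold dLess dm cell
  rcases lt_trichotomy (m * i + lam i) (m * j + lam j) with h | h | h
  · exact Or.inr (Or.inl h)
  · rcases lt_trichotomy (lam i) (lam j) with h' | h' | h'
    · exact Or.inl (Or.inr ⟨h, h'⟩)
    · exact absurd (Nat.eq_of_mul_eq_mul_left hm (by omega)) hval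
    · exact Or.inr (Or.inr ⟨h.symm, h'⟩)
  · exact Or.inl (Or.inl h)

theorem ncard_setOf_comp_equiv {α β : Type*} (e : α ≃ β) (P : β → Prop) :
    Set.ncard {a | P (e a)} = Set.ncard {b | P b} :=
  Set.ncard_preimage_of_injective_subset_range e.injective (e.range_eq_univ ▸ Set.subset_univ _)

theorem eq_sort_of_strictMono_comp {α : Type*} [LinearOrder α] {n : ℕ} {f : Fin n → α}
    {σ : Equiv.Perm (Fin n)} (h : StrictMono (f ∘ σ)) : σ = Tuple.sort f :=
  Tuple.eq_sort_iff.mpr ⟨h.monotone, fun _ _ hij he => absurd he (h hij).ne⟩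

section SuperKey

variable {n : ℕ} (lam T : Fin n → ℕ)

/-- `x <_d y` is the lexicographic order on `(-d(x), j)`; it is reversed for negative letters. -/
def superKey (i : Fin n) : ℕ ×ₗ ℤ ×ₗ ℤ :=
  toLex (T i, if T i % 2 = 1 then toLex (((i : ℤ) + lam i), -(lam i : ℤ))
    else toLex (-((i : ℤ) + lam i), (lam i : ℤ)))

variable {lam T} {i j : Fin n}

theorem superKey_lt_iff :
    superKey lam T i < superKey lam T j ↔ T i ≤ T j ∧ (T i = T j →
      if T i % 2 = 1 then dLess 1 (cell lam j) (cell lam i)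
      else dLess 1 (cell lam i) (cell lam j)) := by
  simp only [superKey, Prod.Lex.toLex_lt_toLex']
  refine and_congr_right fun _ => imp_congr_right fun heq => ?_
  rw [← heq]
  split_ifs <;> simp only [Prod.Lex.toLex_lt_toLex, dLess, dm, cell] <;> omega

theorem superKey_injective : Function.Injective (superKey lam T) := by
  intro i j h
  simp only [superKey, toLex_inj, Prod.mk.injEq] at h
  obtain ⟨hT, h⟩ := h
  rw [hT] at h
  ext
  split_ifs at h <;> simp only [toLex_inj, Prod.mk.injEq] at h <;> omega

theorem superKey_lt_iff_of_dLess (h : dLess 1 (cell lam j) (cell lam i)) :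
    superKey lam T i < superKey lam T j ↔ T i < T j ∨ T i = T j ∧ T i % 2 = 1 := by
  rw [superKey_lt_iff]
  by_cases hodd : T i % 2 = 1
  · simp only [hodd, if_true, h, implies_true, and_true]
    exact le_iff_lt_or_eq
  · simp only [hodd, if_false, dLess_asymm h, imp_false, and_false, or_false]
    exact lt_iff_le_and_ne.symm

theorem superKey_lt_iff_of_ne (hij : i ≠ j) :
    superKey lam T i < superKey lam T j ↔ T i ≤ T j ∧ (T i = T j →
      (T i % 2 = 0 → ¬ dLess 1 (cell lam j) (cell lam i)) ∧
        (T i % 2 = 1 → dLess 1 (cell lam j) (cell lam i))) := by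
  rw [superKey_lt_iff]
  refine and_congr_right fun _ => imp_congr_right fun _ => ?_
  by_cases hodd : T i % 2 = 1
  · simp only [hodd, if_true, one_ne_zero, false_imp_iff, true_and, forall_const]
  · have heven : T i % 2 = 0 := by omega
    rw [if_neg hodd]
    simp only [heven, forall_const, zero_ne_one, false_imp_iff, and_true]
    exact ⟨dLess_asymm, (dLess_cell_total one_pos lam hij).resolve_right⟩

theorem strictMono_superKey_comp_sort :
    StrictMono (superKey lam T ∘ Tuple.sort (superKey lam T)) :=
  (Tuple.monotone_sort _).strictMono_of_injective
    (superKey_injective.comp (Tuple.sort _).injective)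

end SuperKey

section ReadingOrder

variable {n : ℕ}

def standardOfPerm (π : Equiv.Perm (Fin n)) (i : Fin n) : ℕ := (π.symm i : ℕ) + 1

theorem standardOfPerm_injective : Function.Injective (standardOfPerm (n := n)) := by
  intro π σ h
  refine Equiv.symm_bijective.injective (Equiv.ext fun i => Fin.ext ?_)
  simpa [standardOfPerm] using congrFun h i

theorem exists_standardOfPerm_eq {S : Fin n → ℕ} (hinj : Function.Injective S)
    (hpos : ∀ i, 1 ≤ S i) (hle : ∀ i, S i ≤ n) : ∃ π, standardOfPerm π = S := by
  let f : Fin n → Fin n := fun i => ⟨S i - 1, by have := hpos i; have := hle i; omega⟩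
  have hf : Function.Injective f := fun i j h => hinj (by
    have := hpos i; have := hpos j; simp only [f, Fin.mk.injEq] at h; omega)
  refine ⟨(Equiv.ofBijective f (Finite.injective_iff_bijective.mp hf)).symm, funext fun i => ?_⟩
  have := hpos i
  simp only [standardOfPerm, Equiv.symm_symm, Equiv.ofBijective_apply, f]
  omega

theorem zCont_comp_perm (T : Fin n → ℕ) (π : Equiv.Perm (Fin n)) (b : ℕ) :
    zCont (T ∘ π) b = zCont T b :=
  ncard_setOf_comp_equiv π (fun i => T i = 2 * (b + 1))

theorem wCont_comp_perm (T : Fin n → ℕ) (π : Equiv.Perm (Fin n)) (b : ℕ) :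
    wCont (T ∘ π) b = wCont T b :=
  ncard_setOf_comp_equiv π (fun i => T i = 2 * (b + 1) + 1)

variable {lam T : Fin n → ℕ} {π : Equiv.Perm (Fin n)}

theorem standardOfPerm_lt_iff (hπ : StrictMono (superKey lam T ∘ π)) {i j : Fin n} :
    standardOfPerm π i < standardOfPerm π j ↔ superKey lam T i < superKey lam T j := by
  simpa [standardOfPerm] using (hπ.lt_iff_lt (a := π.symm i) (b := π.symm j)).symm

theorem isStandard_standardOfPerm_iff (hπ : StrictMono (superKey lam T ∘ π)) :
    IsStandard lam (standardOfPerm π) ↔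
      ∀ i j, SameCol lam i j → T i < T j ∨ T i = T j ∧ T i % 2 = 1 := by
  have hcol : ∀ {i j}, SameCol lam i j → dLess 1 (cell lam j) (cell lam i) := by
    rintro i j ⟨hij, hlam⟩
    simp only [dLess, dm, cell]
    omega
  have hinj : Function.Injective (standardOfPerm π) := fun i j h =>
    π.symm.injective (Fin.ext (by simpa [standardOfPerm] using h))
  constructor
  · rintro ⟨⟨-, hS⟩, -⟩ i j h
    exact (superKey_lt_iff_of_dLess (hcol h)).mp ((standardOfPerm_lt_iff hπ).mp (hS i j h))
  · intro hT
    refine ⟨⟨fun i => Nat.le_add_left 1 _, fun i j h => ?_⟩, hinj, fun i => (π.symm i).isLt⟩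
    exact (standardOfPerm_lt_iff hπ).mpr ((superKey_lt_iff_of_dLess (hcol h)).mpr (hT i j h))

theorem dinv_standardOfPerm (hπ : StrictMono (superKey lam T ∘ π)) :
    dinv lam (standardOfPerm π) = sdinv lam T := by
  have hadm : ∀ {i j}, Admissible (cell lam i) (cell lam j) →
      dLess 1 (cell lam j) (cell lam i) := by
    intro i j h
    simp only [Admissible, dLess, dm, cell] at h ⊢
    omega
  unfold dinv sdinv
  congr 1
  ext p
  exact and_congr_right fun h =>
    (standardOfPerm_lt_iff hπ).trans (superKey_lt_iff_of_dLess (hadm h))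

theorem succ_mem_ddSet_standardOfPerm_iff {m : ℕ} {lam : Fin (m + 1) → ℕ}
    {π : Equiv.Perm (Fin (m + 1))} (i : Fin m) :
    (i : ℕ) + 1 ∈ ddSet 1 lam (standardOfPerm π) ↔
      dLess 1 (cell lam (π i.succ)) (cell lam (π i.castSucc)) := by
  simp only [ddSet, standardOfPerm, Set.mem_ofPred_eq]
  constructor
  · rintro ⟨a, b, ha, hb, hd⟩
    obtain rfl : a = π i.castSucc := π.symm_apply_eq.mp (Fin.ext (by rw [Fin.val_castSucc]; omega))
    obtain rfl : b = π i.succ := π.symm_apply_eq.mp (Fin.ext (by rw [Fin.val_succ]; omega))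
    exact hd
  · intro hd
    exact ⟨π i.castSucc, π i.succ, by simp, by simp, hd⟩

theorem isSuperWord_standardOfPerm_iff :
    IsSuperWord n (ddSet 1 lam (standardOfPerm π)) (T ∘ π) ↔
      (∀ i, 2 ≤ T i) ∧ StrictMono (superKey lam T ∘ π) := by
  unfold IsSuperWord
  refine and_congr (π.surjective.forall (p := fun i => 2 ≤ T i)).symm ?_
  cases n with
  | zero => simp [Subsingleton.monotone, Subsingleton.strictMono]
  | succ m =>
    have hstep (i : Fin m) : superKey lam T (π i.castSucc) < superKey lam T (π i.succ) ↔
        T (π i.castSucc) ≤ T (π i.succ) ∧ (T (π i.castSucc) = T (π i.succ) →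
          (T (π i.castSucc) % 2 = 0 → (i : ℕ) + 1 ∉ ddSet 1 lam (standardOfPerm π)) ∧
            (T (π i.castSucc) % 2 = 1 → (i : ℕ) + 1 ∈ ddSet 1 lam (standardOfPerm π))) := by
      rw [superKey_lt_iff_of_ne (π.injective.ne (Fin.castSucc_lt_succ (i := i)).ne),
        succ_mem_ddSet_standardOfPerm_iff]
    rw [Fin.monotone_iff_le_succ, Fin.strictMono_iff_lt_succ]
    constructor
    · rintro ⟨hmono, htie⟩ i
      exact (hstep i).mpr ⟨hmono i, htie i (by omega) (by omega)⟩
    · intro h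
      exact ⟨fun i => ((hstep i).mp (h i)).1, fun k _ _ => ((hstep ⟨k, by omega⟩).mp (h _)).2⟩

theorem standardPair_iff {k : ℕ} {c c' : ℕ → ℕ} :
    (IsStandard lam (standardOfPerm π) ∧ dinv lam (standardOfPerm π) = k ∧
      IsSuperWord n (ddSet 1 lam (standardOfPerm π)) (T ∘ π) ∧
      (∀ b, zCont (T ∘ π) b = c b) ∧ (∀ b, wCont (T ∘ π) b = c' b)) ↔
    (IsSuperStrip lam T ∧ sdinv lam T = k ∧
      (∀ b, zCont T b = c b) ∧ (∀ b, wCont T b = c' b)) ∧ StrictMono (superKey lam T ∘ π) := by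
  simp only [zCont_comp_perm, wCont_comp_perm, isSuperWord_standardOfPerm_iff]
  constructor
  · rintro ⟨hS, hd, ⟨h2, hπ⟩, hz, hw⟩
    exact ⟨⟨⟨h2, (isStandard_standardOfPerm_iff hπ).mp hS⟩,
      (dinv_standardOfPerm hπ).symm.trans hd, hz, hw⟩, hπ⟩
  · rintro ⟨⟨⟨h2, hcol⟩, hd, hz, hw⟩, hπ⟩
    exact ⟨(isStandard_standardOfPerm_iff hπ).mpr hcol, (dinv_standardOfPerm hπ).trans hd,
      ⟨h2, hπ⟩, hz, hw⟩

end ReadingOrder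

/-- Coefficientwise: both sides count the terms contributing to `q^k z^c w^{c'}`. -/
theorem statement3_general (n : ℕ) (lam : Fin n → ℕ) (c c' : ℕ → ℕ) (k : ℕ) :
    Set.ncard {T : Fin n → ℕ | IsSuperStrip lam T ∧ sdinv lam T = k ∧
      (∀ b, zCont T b = c b) ∧ (∀ b, wCont T b = c' b)} =
    Set.ncard {Sa : (Fin n → ℕ) × (Fin n → ℕ) |
      IsStandard lam Sa.1 ∧ dinv lam Sa.1 = k ∧
      IsSuperWord n (ddSet 1 lam Sa.1) Sa.2 ∧
      (∀ b, zCont Sa.2 b = c b) ∧ (∀ b, wCont Sa.2 b = c' b)} := by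
  refine Set.ncard_congr (fun T _ => (standardOfPerm (Tuple.sort (superKey lam T)),
    T ∘ Tuple.sort (superKey lam T))) (fun T hT => standardPair_iff.mpr
      ⟨hT, strictMono_superKey_comp_sort⟩) ?_ ?_
  · intro T T' _ _ h
    obtain ⟨hπ, hword⟩ := Prod.mk.inj h
    rw [standardOfPerm_injective hπ] at hword
    exact (Tuple.sort _).surjective.injective_comp_right hword
  · rintro ⟨S, a⟩ ⟨hS, hpair⟩
    obtain ⟨π, rfl⟩ := exists_standardOfPerm_eq hS.2.1 hS.1.1 hS.2.2
    obtain ⟨T, rfl⟩ : ∃ T, a = T ∘ π := ⟨a ∘ π.symm, by ext; simp⟩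
    obtain ⟨hT, hπ⟩ := standardPair_iff.mp ⟨hS, hpair⟩
    exact ⟨T, hT, by rw [← eq_sort_of_strictMono_comp hπ]⟩

/-- `Σ_{T super} q^{dinv(T)} z^T = Σ_{S standard} q^{dinv(S)} Q̃_{n,dd(S)}(z,w)`,
stated coefficientwise: the coefficient of `q^k z^c w^{c'}` on the left counts
super tableaux, and on the right counts pairs of a standard tableau `S` (with
`dinv S = k`) and a monomial word of `Q̃_{n,dd(S)}` of content `(c, c')`. -/
theorem statement3 (n : ℕ) (hn : 1 ≤ n) (lam : Fin n → ℕ) (hlam : IsShape 1 n lam)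
    (c c' : ℕ → ℕ) (k : ℕ) :
    Set.ncard {T : Fin n → ℕ | IsSuperStrip lam T ∧ sdinv lam T = k ∧
      (∀ b, zCont T b = c b) ∧ (∀ b, wCont T b = c' b)} =
    Set.ncard {Sa : (Fin n → ℕ) × (Fin n → ℕ) |
      IsStandard lam Sa.1 ∧ dinv lam Sa.1 = k ∧
      IsSuperWord n (ddSet 1 lam Sa.1) Sa.2 ∧
      (∀ b, zCont Sa.2 b = c b) ∧ (∀ b, wCont Sa.2 b = c' b)} :=
  statement3_general n lam c c' k

end HHL
end

section
/- Let λ ⊆ δ_n be a partition and let T be a standard tableau of shape (λ+(1^n))/λ. Then dinv(T) = 0 if and only if the nonzero parts of the conjugate partition λ′ are pairwise distinct and Des(rev(w(T))) = {λ′_1, λ′_2, …, λ′_{λ_1}}, the set of nonzero parts of λ′. -/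
open Classical

namespace HHL

/-- The rank of the cell `x_i` in the `<_d`-increasing listing of the cells of
the vertical strip (so the word `w(f)` has the entry of `T` at the cell of
d-rank `k-1` in its `k`-th position, and `w(f)⁻¹(a) - 1` is the d-rank of the
cell containing `a`). -/
noncomputable def dRank {n : ℕ} (lam : Fin n → ℕ) (i : Fin n) : ℕ :=
  Set.ncard {j : Fin n | dLess 1 (cell lam j) (cell lam i)}

/-- The part `λ'_j` of the conjugate partition: the number of rows of `λ`
of length at least `j`. -/
noncomputable def conjPart {n : ℕ} (lam : Fin n → ℕ) (j : ℕ) : ℕ :=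
  Set.ncard {i : Fin n | j ≤ lam i}

/-- The descent set of `rev(w(T)) = w(T)·w_0`: positions `a ∈ {1,…,n-1}` such
that the entry of `T` at the cell of d-rank `n - a` exceeds the entry at the
cell of d-rank `n - a - 1`. -/
def desRev {n : ℕ} (lam : Fin n → ℕ) (T : Fin n → ℕ) : Set ℕ :=
  {a | 1 ≤ a ∧ a ≤ n - 1 ∧ ∃ p q : Fin n,
    dRank lam p = n - a ∧ dRank lam q = n - a - 1 ∧ T q < T p}

lemma ncard_fin_lt {n a : ℕ} (ha : a ≤ n) : Set.ncard {i : Fin n | (i:ℕ) < a} = a := by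
  have e : {i : Fin n | (i:ℕ) < a} ≃ Fin a :=
    { toFun := fun x => ⟨x.1.1, x.2⟩
      invFun := fun v => ⟨⟨v.1, lt_of_lt_of_le v.2 ha⟩, v.2⟩
      left_inv := fun x => by ext; rfl
      right_inv := fun v => by ext; rfl }
  exact Nat.card_eq_of_equiv_fin e

lemma ncard_fin_gt {n : ℕ} (p : Fin n) :
    Set.ncard {j : Fin n | p < j} = n - 1 - (p:ℕ) := by
  have e : {j : Fin n | p < j} ≃ Fin (n - 1 - (p:ℕ)) :=
    { toFun := fun x => ⟨x.1.1 - (p:ℕ) - 1, by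
        have h1 : (p:ℕ) < x.1.1 := x.2
        have h2 : x.1.1 < n := x.1.2
        omega⟩
      invFun := fun v => ⟨⟨(p:ℕ) + 1 + v.1, by have := v.2; omega⟩, by
        show (p:ℕ) < (p:ℕ) + 1 + v.1; omega⟩
      left_inv := fun x => by
        have h1 : (p:ℕ) < x.1.1 := x.2
        ext; simp; omega
      right_inv := fun v => by ext; simp; omega }
  exact Nat.card_eq_of_equiv_fin e

lemma lam_last {n : ℕ} {lam : Fin n → ℕ} (hlam : IsShape 1 n lam) (i : Fin n)
    (h : (i:ℕ) = n - 1) : lam i = 0 := by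
  have h2 := hlam.2 i
  rw [h, one_mul] at h2
  omega

lemma conj_char {n : ℕ} {lam : Fin n → ℕ} (hlam : IsShape 1 n lam) (j : ℕ) (i : Fin n) :
    j ≤ lam i ↔ (i:ℕ) < conjPart lam j := by
  constructor
  · intro h
    have hsub : {i' : Fin n | (i':ℕ) < (i:ℕ)+1} ⊆ {i' : Fin n | j ≤ lam i'} := by
      intro i' hi'
      have : lam i ≤ lam i' := hlam.1 i' i (by simp only [Fin.le_def]; exact Nat.lt_succ_iff.mp hi')
      exact le_trans h this
    have := Set.ncard_le_ncard hsub (Set.toFinite _)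
    rw [ncard_fin_lt (by omega : (i:ℕ)+1 ≤ n)] at this
    unfold conjPart
    omega
  · intro h
    by_contra hc
    push_neg at hc
    have hsub : {i' : Fin n | j ≤ lam i'} ⊆ {i' : Fin n | (i':ℕ) < (i:ℕ)} := by
      intro i' hi'
      simp only [Set.mem_setOf_eq] at hi' ⊢
      by_contra hge
      push_neg at hge
      have : lam i' ≤ lam i := hlam.1 i i' (by simp only [Fin.le_def]; omega)
      omega
    have := Set.ncard_le_ncard hsub (Set.toFinite _)
    rw [ncard_fin_lt (le_of_lt i.2)] at this
    unfold conjPart at h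
    omega

lemma conj_between {n : ℕ} {lam : Fin n → ℕ} (hlam : IsShape 1 n lam) (p q : Fin n)
    (hpq : (p:ℕ)+1 = (q:ℕ)) (j : ℕ) (h1 : lam q < j) (h2 : j ≤ lam p) :
    conjPart lam j = (q:ℕ) := by
  unfold conjPart
  have hset : {i : Fin n | j ≤ lam i} = {i : Fin n | (i:ℕ) < (q:ℕ)} := by
    ext i
    simp only [Set.mem_setOf_eq]
    constructor
    · intro h
      by_contra hge
      push_neg at hge
      have : lam i ≤ lam q := hlam.1 q i (by simp only [Fin.le_def]; omega)
      omega
    · intro h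
      have : lam p ≤ lam i := hlam.1 i p (by simp only [Fin.le_def]; omega)
      omega
  rw [hset]
  exact ncard_fin_lt (le_of_lt q.2)

lemma parts_eq {n : ℕ} (hn : 1 ≤ n) {lam : Fin n → ℕ} (hlam : IsShape 1 n lam) :
    {v : ℕ | 0 < v ∧ ∃ j : ℕ, 1 ≤ j ∧ conjPart lam j = v} =
    {a : ℕ | 1 ≤ a ∧ a ≤ n-1 ∧ ∃ p q : Fin n, (p:ℕ) = a - 1 ∧ (q:ℕ) = a ∧ lam q < lam p} := by
  ext a
  simp only [Set.mem_setOf_eq]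
  constructor
  · rintro ⟨hv, j, hj, hconj⟩
    have hlast : lam ⟨n-1, by omega⟩ = 0 := lam_last hlam _ (by simp)
    have han : a ≤ n - 1 := by
      by_contra hc
      push_neg at hc
      have := (conj_char hlam j ⟨n-1, by omega⟩).mpr (by simp only [Fin.val_mk]; omega)
      omega
    refine ⟨hv, han, ⟨a-1, by omega⟩, ⟨a, by omega⟩, rfl, rfl, ?_⟩
    have h1 : j ≤ lam ⟨a-1, by omega⟩ :=
      (conj_char hlam j _).mpr (by simp only [Fin.val_mk]; omega)
    have h2 : lam ⟨a, by omega⟩ < j := by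
      by_contra hc
      push_neg at hc
      have := (conj_char hlam j _).mp hc
      simp only [Fin.val_mk] at this
      omega
    omega
  · rintro ⟨h1, h2, p, q, hp, hq, hdrop⟩
    exact ⟨by omega, lam p, by omega,
      by rw [conj_between hlam p q (by omega) (lam p) hdrop le_rfl]; omega⟩

lemma D_mono {n : ℕ} {lam : Fin n → ℕ}
    (hGS : ∀ p q : Fin n, (p:ℕ)+1 = (q:ℕ) → lam p ≤ lam q + 1) :
    ∀ p q : Fin n, (p:ℕ) ≤ (q:ℕ) → (p:ℕ) + lam p ≤ (q:ℕ) + lam q := by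
  suffices h : ∀ t : ℕ, ∀ p q : Fin n, (q:ℕ) = (p:ℕ) + t → (p:ℕ) + lam p ≤ (q:ℕ) + lam q by
    intro p q hle
    exact h ((q:ℕ) - (p:ℕ)) p q (by omega)
  intro t
  induction t with
  | zero =>
    intro p q hq
    have : q = p := Fin.ext (by omega)
    subst this; exact le_rfl
  | succ t ih =>
    intro p q hq
    have hrn : (p:ℕ) + t < n := by have := q.2; omega
    have h1 := ih p ⟨(p:ℕ)+t, hrn⟩ (by simp)
    have h2 := hGS ⟨(p:ℕ)+t, hrn⟩ q (by simp only [Fin.val_mk]; omega)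
    simp only [Fin.val_mk] at h1 h2
    omega

lemma dRank_eq {n : ℕ} {lam : Fin n → ℕ} (hlam : IsShape 1 n lam)
    (hGS : ∀ p q : Fin n, (p:ℕ)+1 = (q:ℕ) → lam p ≤ lam q + 1) (i : Fin n) :
    dRank lam i = n - 1 - (i:ℕ) := by
  have hset : {j : Fin n | dLess 1 (cell lam j) (cell lam i)} = {j : Fin n | i < j} := by
    ext j
    simp only [Set.mem_setOf_eq, dLess, dm, cell, one_mul, Fin.lt_def]
    constructor
    · rintro (h | ⟨h1, h2⟩)
      · by_contra hc
        push_neg at hc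
        have := D_mono hGS j i hc
        omega
      · by_contra hc
        push_neg at hc
        have := hlam.1 j i (by simp only [Fin.le_def]; omega)
        omega
    · intro h
      have := D_mono hGS i j (le_of_lt h)
      rcases eq_or_lt_of_le this with heq | hlt
      · exact Or.inr ⟨heq.symm, by omega⟩
      · exact Or.inl hlt
  unfold dRank
  rw [hset, ncard_fin_gt]

lemma desRev_eq {n : ℕ} {lam : Fin n → ℕ} {T : Fin n → ℕ} (hlam : IsShape 1 n lam)
    (hGS : ∀ p q : Fin n, (p:ℕ)+1 = (q:ℕ) → lam p ≤ lam q + 1) :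
    desRev lam T =
    {a : ℕ | 1 ≤ a ∧ a ≤ n-1 ∧ ∃ p q : Fin n, (p:ℕ) = a - 1 ∧ (q:ℕ) = a ∧ T q < T p} := by
  ext a
  simp only [desRev, Set.mem_setOf_eq]
  constructor
  · rintro ⟨h1, h2, p, q, hp, hq, hT⟩
    rw [dRank_eq hlam hGS] at hp hq
    have hpn := p.2
    have hqn := q.2
    exact ⟨h1, h2, p, q, by omega, by omega, hT⟩
  · rintro ⟨h1, h2, p, q, hp, hq, hT⟩
    refine ⟨h1, h2, p, q, ?_, ?_, hT⟩ <;> rw [dRank_eq hlam hGS] <;> omega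

lemma dinv_zero_iff {n : ℕ} (lam : Fin n → ℕ) (T : Fin n → ℕ) :
    dinv lam T = 0 ↔
    ∀ p q : Fin n, Admissible (cell lam p) (cell lam q) → ¬ T p < T q := by
  unfold dinv
  rw [Set.ncard_eq_zero (Set.toFinite _), Set.eq_empty_iff_forall_notMem]
  constructor
  · intro h p q ha ht
    exact h (p, q) ⟨ha, ht⟩
  · rintro h ⟨p, q⟩ ⟨ha, ht⟩
    exact h p q ha ht

lemma NI_to_GS {n : ℕ} {lam : Fin n → ℕ} {T : Fin n → ℕ} (hlam : IsShape 1 n lam)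
    (hT : IsStandard lam T)
    (NI : ∀ p q : Fin n, Admissible (cell lam p) (cell lam q) → ¬ T p < T q) :
    ∀ p q : Fin n, (p:ℕ)+1 = (q:ℕ) → lam p ≤ lam q + 1 := by
  classical
  intro k k1 hk
  by_contra hbad
  push_neg at hbad
  have hbad2 : lam k1 + 2 ≤ lam k := hbad
  have hkn : (k:ℕ) < n - 1 := by have := k1.2; omega
  have hn1 : n - 1 < n := by omega
  have hlast : lam ⟨n-1, hn1⟩ = 0 := by
    have h2 := hlam.2 ⟨n-1, hn1⟩
    simp only [Fin.val_mk, one_mul] at h2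
    omega
  have hbk := hlam.2 k
  rw [one_mul] at hbk
  have hex : ∃ i : ℕ, (k:ℕ) < i ∧ ∃ h : i < n, (k:ℕ) + lam k ≤ i + lam ⟨i, h⟩ :=
    ⟨n-1, hkn, hn1, by rw [hlast]; omega⟩
  obtain ⟨j, ⟨hkj, hjn, hDj⟩, hmin⟩ :
      ∃ j : ℕ, ((k:ℕ) < j ∧ ∃ h : j < n, (k:ℕ) + lam k ≤ j + lam ⟨j, h⟩) ∧
        ∀ m, m < j → ¬((k:ℕ) < m ∧ ∃ h : m < n, (k:ℕ) + lam k ≤ m + lam ⟨m, h⟩) :=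
    ⟨Nat.find hex, Nat.find_spec hex, fun m hm => Nat.find_min hex hm⟩
  -- j ≠ k + 1
  have hjne : j ≠ (k:ℕ) + 1 := by
    intro hc
    subst hc
    have hek : (⟨(k:ℕ)+1, hjn⟩ : Fin n) = k1 := Fin.ext (by simp only [Fin.val_mk]; omega)
    rw [hek] at hDj
    omega
  have hj2 : (k:ℕ) + 2 ≤ j := by omega
  have hj1n : j - 1 < n := by omega
  have hD1 : (j-1) + lam ⟨j-1, hj1n⟩ < (k:ℕ) + lam k := by
    by_contra hc
    push_neg at hc
    exact hmin (j-1) (by omega) ⟨by omega, hj1n, hc⟩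
  have hjn2 := hjn
  have hDj2 := hDj
  have hstep : lam ⟨j, hjn2⟩ ≤ lam ⟨j-1, hj1n⟩ :=
    hlam.1 ⟨j-1, hj1n⟩ ⟨j, hjn2⟩ (by simp only [Fin.le_def, Fin.val_mk]; omega)
  -- equalities
  have heq1 : j + lam ⟨j, hjn2⟩ = (k:ℕ) + lam k := by omega
  have heq2 : lam ⟨j, hjn2⟩ = lam ⟨j-1, hj1n⟩ := by omega
  have hcol : T ⟨j-1, hj1n⟩ < T ⟨j, hjn2⟩ :=
    hT.1.2 _ _ ⟨by simp only [Fin.val_mk]; omega, heq2.symm⟩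
  have hle1 : lam ⟨j-1, hj1n⟩ ≤ lam k1 :=
    hlam.1 k1 ⟨j-1, hj1n⟩ (by simp only [Fin.le_def, Fin.val_mk]; omega)
  have hA1 : Admissible (cell lam k) (cell lam ⟨j, hjn2⟩) := by
    simp only [Admissible, cell, Fin.val_mk]
    omega
  have hA2 : Admissible (cell lam ⟨j-1, hj1n⟩) (cell lam k) := by
    simp only [Admissible, cell, Fin.val_mk]
    omega
  have hn1' := NI _ _ hA1
  have hn2' := NI _ _ hA2
  have hne1 : T k ≠ T ⟨j, hjn2⟩ := fun h => by
    have h5 := congrArg Fin.val (hT.2.1 h)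
    simp only [Fin.val_mk] at h5
    omega
  have hne2 : T ⟨j-1, hj1n⟩ ≠ T k := fun h => by
    have h5 := congrArg Fin.val (hT.2.1 h)
    simp only [Fin.val_mk] at h5
    omega
  omega

lemma step_iff {n : ℕ} {lam : Fin n → ℕ} {T : Fin n → ℕ} (hlam : IsShape 1 n lam)
    (hT : IsStandard lam T)
    (hGS : ∀ p q : Fin n, (p:ℕ)+1 = (q:ℕ) → lam p ≤ lam q + 1)
    (NI : ∀ p q : Fin n, Admissible (cell lam p) (cell lam q) → ¬ T p < T q)
    (p q : Fin n) (hpq : (p:ℕ)+1 = (q:ℕ)) :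
    (T q < T p ↔ lam q < lam p) := by
  constructor
  · intro h
    by_contra hc
    push_neg at hc
    have hge : lam q ≤ lam p := hlam.1 p q (by simp only [Fin.le_def]; omega)
    have heq : lam p = lam q := by omega
    have := hT.1.2 p q ⟨hpq, heq⟩
    omega
  · intro h
    have heq : lam p = lam q + 1 := by have := hGS p q hpq; omega
    have hA : Admissible (cell lam p) (cell lam q) := by
      simp only [Admissible, cell]
      omega
    have := NI _ _ hA
    have hne : T p ≠ T q := fun hh => by
      have := hT.2.1 hh
      rw [Fin.ext_iff] at this
      omega
    omega

lemma to_NI {n : ℕ} {lam : Fin n → ℕ} {T : Fin n → ℕ} (hlam : IsShape 1 n lam)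
    (hGS : ∀ p q : Fin n, (p:ℕ)+1 = (q:ℕ) → lam p ≤ lam q + 1)
    (hdes : ∀ p q : Fin n, (p:ℕ)+1 = (q:ℕ) → (T q < T p ↔ lam q < lam p)) :
    ∀ p q : Fin n, Admissible (cell lam p) (cell lam q) → ¬ T p < T q := by
  have key : ∀ t : ℕ, ∀ p q : Fin n, (q:ℕ) = (p:ℕ) + (t+1) →
      (p:ℕ) + lam p = (q:ℕ) + lam q → T q < T p := by
    intro t
    induction t with
    | zero =>
      intro p q h1 h2
      exact (hdes p q (by omega)).mpr (by omega)
    | succ t ih =>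
      intro p q h1 h2
      have hrn : (p:ℕ) + (t+1) < n := by have := q.2; omega
      have hDr : (p:ℕ) + lam p ≤ ((p:ℕ)+(t+1)) + lam ⟨(p:ℕ)+(t+1), hrn⟩ := by
        have := D_mono hGS p ⟨(p:ℕ)+(t+1), hrn⟩ (by simp only [Fin.val_mk]; omega)
        simpa using this
      have hDrq : ((p:ℕ)+(t+1)) + lam ⟨(p:ℕ)+(t+1), hrn⟩ ≤ (q:ℕ) + lam q := by
        have := D_mono hGS ⟨(p:ℕ)+(t+1), hrn⟩ q (by simp only [Fin.val_mk]; omega)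
        simpa using this
      have h3 : T ⟨(p:ℕ)+(t+1), hrn⟩ < T p :=
        ih p ⟨(p:ℕ)+(t+1), hrn⟩ (by simp) (by simp only [Fin.val_mk]; omega)
      have h4 : T q < T ⟨(p:ℕ)+(t+1), hrn⟩ :=
        (hdes ⟨(p:ℕ)+(t+1), hrn⟩ q (by simp only [Fin.val_mk]; omega)).mpr
          (by omega)
      omega
  intro p q hadm
  simp only [Admissible, cell] at hadm
  rcases hadm with ⟨h1, h2⟩ | ⟨h1, h2⟩
  · have hpq : (p:ℕ) < (q:ℕ) := by
      by_contra hc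
      push_neg at hc
      have := hlam.1 q p (by simp only [Fin.le_def]; omega)
      omega
    have := key ((q:ℕ) - (p:ℕ) - 1) p q (by omega) (by omega)
    omega
  · have hqp : (q:ℕ) < (p:ℕ) := by
      by_contra hc
      push_neg at hc
      have := hlam.1 p q (by simp only [Fin.le_def]; omega)
      omega
    have := D_mono hGS q p (le_of_lt hqp)
    omega


/-- A standard tableau `T` of shape `(λ+(1^n))/λ` has `dinv T = 0` iff the
nonzero parts of `λ'` are pairwise distinct and the descent set of
`rev(w(T))` is exactly the set of nonzero parts of `λ'`. -/
theorem statement7 (n : ℕ) (hn : 1 ≤ n) (lam : Fin n → ℕ) (hlam : IsShape 1 n lam)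
    (T : Fin n → ℕ) (hT : IsStandard lam T) :
    dinv lam T = 0 ↔
      ((∀ j1 j2 : ℕ, 1 ≤ j1 → j1 < j2 → 0 < conjPart lam j2 →
          conjPart lam j1 ≠ conjPart lam j2) ∧
        desRev lam T = {v : ℕ | 0 < v ∧ ∃ j : ℕ, 1 ≤ j ∧ conjPart lam j = v}) := by
  classical
  constructor
  · intro h0
    have NI := (dinv_zero_iff lam T).mp h0
    have hGS := NI_to_GS hlam hT NI
    constructor
    · intro j1 j2 hj1 hj12 hpos heq
      have hn1 : n - 1 < n := by omega
      have hlast : lam ⟨n-1, hn1⟩ = 0 := lam_last hlam _ (by simp)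
      have han : conjPart lam j2 ≤ n - 1 := by
        by_contra hc
        push_neg at hc
        have := (conj_char hlam j2 ⟨n-1, hn1⟩).mpr (by simp only [Fin.val_mk]; omega)
        omega
      have hpn : conjPart lam j2 - 1 < n := by omega
      have hqn : conjPart lam j2 < n := by omega
      have h1 : j2 ≤ lam ⟨conjPart lam j2 - 1, hpn⟩ :=
        (conj_char hlam j2 _).mpr (by simp only [Fin.val_mk]; omega)
      have h2 : lam ⟨conjPart lam j2, hqn⟩ < j1 := by
        by_contra hc
        push_neg at hc
        have := (conj_char hlam j1 _).mp hc
        simp only [Fin.val_mk] at this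
        omega
      have h3 := hGS ⟨conjPart lam j2 - 1, hpn⟩ ⟨conjPart lam j2, hqn⟩
        (by simp only [Fin.val_mk]; omega)
      omega
    · rw [desRev_eq hlam hGS, parts_eq hn hlam]
      ext a
      simp only [Set.mem_setOf_eq]
      constructor
      · rintro ⟨h1, h2, p, q, hp, hq, h3⟩
        exact ⟨h1, h2, p, q, hp, hq, (step_iff hlam hT hGS NI p q (by omega)).mp h3⟩
      · rintro ⟨h1, h2, p, q, hp, hq, h3⟩
        exact ⟨h1, h2, p, q, hp, hq, (step_iff hlam hT hGS NI p q (by omega)).mpr h3⟩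
  · rintro ⟨hdist, hdes⟩
    have hGS : ∀ p q : Fin n, (p:ℕ)+1 = (q:ℕ) → lam p ≤ lam q + 1 := by
      intro p q hpq
      by_contra hc
      push_neg at hc
      have e1 : conjPart lam (lam q + 1) = (q:ℕ) :=
        conj_between hlam p q hpq _ (by omega) (by omega)
      have e2 : conjPart lam (lam q + 2) = (q:ℕ) :=
        conj_between hlam p q hpq _ (by omega) (by omega)
      exact hdist (lam q + 1) (lam q + 2) (by omega) (by omega)
        (by rw [e2]; omega) (e1.trans e2.symm)
    rw [desRev_eq hlam hGS, parts_eq hn hlam] at hdes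
    have hdes' : ∀ p q : Fin n, (p:ℕ)+1 = (q:ℕ) → (T q < T p ↔ lam q < lam p) := by
      intro p q hpq
      have hmem := Set.ext_iff.mp hdes (q:ℕ)
      simp only [Set.mem_setOf_eq] at hmem
      constructor
      · intro h
        obtain ⟨_, _, p', q', hp', hq', h3⟩ :=
          hmem.mp ⟨by omega, by have := q.2; omega, p, q, by omega, rfl, h⟩
        have hep : p' = p := Fin.ext (by omega)
        have heq' : q' = q := Fin.ext (by omega)
        rw [hep, heq'] at h3
        exact h3
      · intro h
        obtain ⟨_, _, p', q', hp', hq', h3⟩ :=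
          hmem.mpr ⟨by omega, by have := q.2; omega, p, q, by omega, rfl, h⟩
        have hep : p' = p := Fin.ext (by omega)
        have heq' : q' = q := Fin.ext (by omega)
        rw [hep, heq'] at h3
        exact h3
    exact (dinv_zero_iff lam T).mpr (to_NI hlam hGS hdes')


end HHL
end

section
/- There is the identity Σ_{λ⊆δ_n} Σ_{S standard of shape (λ+(1^n))/λ with dinv(S) = 0} t^{|δ_n|−|λ|} Q_{n, dd(S)}(z) = Σ_{w ∈ S_n} t^{maj(w_0 w w_0)} Q_{n, Des(w^{−1})}(z), as formal power series in z with coefficients in ℕ[t]; equivalently, D_n(z;0,t) = Σ_{w ∈ S_n} t^{maj(w_0 w w_0)} Q_{n, Des(w^{−1})}(z). -/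
open Classical

namespace HHL

/-- The longest permutation `w_0` of `Fin n` (one-line word `n, n-1, …, 1`). -/
def wzero {n : ℕ} : Fin n → Fin n := fun i => ⟨n - 1 - (i : ℕ), by omega⟩

/-- The descent set of (the one-line word of) `u`, as a set of positions in
`{1, …, n-1}`. -/
def DesF {n : ℕ} (u : Fin n → Fin n) : Set ℕ :=
  {i | ∃ (h0 : 0 < i) (h : i < n), u ⟨i, h⟩ < u ⟨i - 1, by omega⟩}

/-- The major index of (the one-line word of) `u`. -/
noncomputable def majF {n : ℕ} (u : Fin n → Fin n) : ℕ :=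
  ∑ i ∈ Finset.range n, if i ∈ DesF u then i else 0

/-- A weakly increasing word `a_1 ≤ ⋯ ≤ a_n` of positive letters whose equal
consecutive letters avoid `D`; these index the monomials of Gessel's
quasisymmetric function `Q_{n,D}(z)`. -/
def IsPosWord (n : ℕ) (D : Set ℕ) (a : Fin n → ℕ) : Prop :=
  (∀ i, 1 ≤ a i) ∧ Monotone a ∧
  ∀ (k : ℕ) (h1 : k < n) (h2 : k + 1 < n),
    a ⟨k, h1⟩ = a ⟨k + 1, h2⟩ → (k + 1) ∉ D

section Aux

variable {n : ℕ}

/-- The one-line word of `w` extended to `ℕ`, injectively (values `1..n` then `q+1`). -/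
def Wfun (n : ℕ) (w : Equiv.Perm (Fin n)) (q : ℕ) : ℕ :=
  if h : q < n then (w ⟨q, h⟩ : ℕ) + 1 else q + 1

lemma Wfun_pos (w : Equiv.Perm (Fin n)) (q : ℕ) : 1 ≤ Wfun n w q := by
  unfold Wfun; split <;> omega

lemma Wfun_le (w : Equiv.Perm (Fin n)) {q : ℕ} (h : q < n) : Wfun n w q ≤ n := by
  unfold Wfun; rw [dif_pos h]; have := (w ⟨q, h⟩).isLt; omega

lemma Wfun_inj (w : Equiv.Perm (Fin n)) : Function.Injective (Wfun n w) := by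
  intro a b hab
  unfold Wfun at hab
  split_ifs at hab with ha hb hb
  · have : w ⟨a, ha⟩ = w ⟨b, hb⟩ := Fin.ext (by omega)
    have := w.injective this
    exact congrArg Fin.val this
  · have := (w ⟨a, ha⟩).isLt; omega
  · have := (w ⟨b, hb⟩).isLt; omega
  · omega

/-- The shape associated to `w`: row `k` has length the number of ascents of the
word among positions `q < n-1-k`. -/
def lamN (n : ℕ) (w : Equiv.Perm (Fin n)) (k : ℕ) : ℕ :=
  ((Finset.range (n - 1 - k)).filter (fun q => Wfun n w q < Wfun n w (q + 1))).card

lemma lamN_le (w : Equiv.Perm (Fin n)) (k : ℕ) : lamN n w k ≤ n - 1 - k :=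
  le_trans (Finset.card_filter_le _ _) (le_of_eq (Finset.card_range _))

lemma lamN_anti (w : Equiv.Perm (Fin n)) {k l : ℕ} (h : k ≤ l) :
    lamN n w l ≤ lamN n w k :=
  Finset.card_le_card (Finset.filter_subset_filter _ (Finset.range_subset_range.2 (by omega)))

lemma lamN_succ (w : Equiv.Perm (Fin n)) {k : ℕ} (h : k + 1 ≤ n - 1) :
    lamN n w k = lamN n w (k + 1) +
      (if Wfun n w (n - 2 - k) < Wfun n w ((n - 2 - k) + 1) then 1 else 0) := by
  have h1 : n - 1 - k = (n - 2 - k) + 1 := by omega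
  have h2 : n - 1 - (k + 1) = n - 2 - k := by omega
  unfold lamN
  rw [h1, h2, Finset.range_add_one, Finset.filter_insert]
  split_ifs with hp
  · rw [Finset.card_insert_of_notMem (by simp [Finset.mem_filter])]
  · omega

def dN (n : ℕ) (w : Equiv.Perm (Fin n)) (k : ℕ) : ℕ := k + lamN n w k

lemma lamN_le_succ (w : Equiv.Perm (Fin n)) (k : ℕ) :
    lamN n w k ≤ lamN n w (k + 1) + 1 := by
  by_cases h : k + 1 ≤ n - 1
  · rw [lamN_succ w h]; split <;> omega
  · have h0 : n - 1 - k = 0 := by omega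
    have : lamN n w k = 0 := by unfold lamN; rw [h0]; simp
    omega

lemma dN_mono (w : Equiv.Perm (Fin n)) : Monotone (dN n w) := by
  apply monotone_nat_of_le_succ
  intro k
  have := lamN_le_succ w k
  unfold dN; omega

lemma run_desc (w : Equiv.Perm (Fin n)) {k : ℕ} (h : k + 1 ≤ n - 1)
    (hd : dN n w k = dN n w (k + 1)) :
    Wfun n w (n - 1 - (k + 1)) < Wfun n w (n - 1 - k) := by
  have hs := lamN_succ w h
  have h2 : n - 1 - (k + 1) = n - 2 - k := by omega
  have h3 : (n - 2 - k) + 1 = n - 1 - k := by omega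
  unfold dN at hd
  by_cases hp : Wfun n w (n - 2 - k) < Wfun n w ((n - 2 - k) + 1)
  · rw [h2, ← h3]; exact hp
  · rw [if_neg hp] at hs; omega

lemma col_asc (w : Equiv.Perm (Fin n)) {k : ℕ} (h : k + 1 ≤ n - 1)
    (hl : lamN n w k = lamN n w (k + 1)) :
    Wfun n w (n - 1 - k) < Wfun n w (n - 1 - (k + 1)) := by
  have hs := lamN_succ w h
  have h2 : n - 1 - (k + 1) = n - 2 - k := by omega
  have h3 : (n - 2 - k) + 1 = n - 1 - k := by omega
  by_cases hp : Wfun n w (n - 2 - k) < Wfun n w ((n - 2 - k) + 1)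
  · rw [if_pos hp] at hs; omega
  · rw [h2]
    have hne : Wfun n w (n - 2 - k) ≠ Wfun n w ((n - 2 - k) + 1) := by
      intro he; have := Wfun_inj w he; omega
    rw [h3] at hp hne
    omega

lemma run_lt (w : Equiv.Perm (Fin n)) :
    ∀ b a : ℕ, a < b → b ≤ n - 1 → dN n w a = dN n w b →
      Wfun n w (n - 1 - b) < Wfun n w (n - 1 - a) := by
  intro b
  induction b with
  | zero => omega
  | succ b ih =>
    intro a ha hb hd
    have h1 : dN n w a ≤ dN n w b := dN_mono w (by omega)
    have h2 : dN n w b ≤ dN n w (b + 1) := dN_mono w (by omega)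
    have hdb : dN n w b = dN n w (b + 1) := by omega
    have hcons := run_desc w (by omega) hdb
    rcases Nat.lt_or_ge a b with h | h
    · exact lt_trans hcons (ih a h (by omega) (by omega))
    · have : a = b := by omega
      subst this; exact hcons

/-- The shape map and tableau map. -/
def lamOf (n : ℕ) (w : Equiv.Perm (Fin n)) : Fin n → ℕ := fun i => lamN n w i

def SOf (n : ℕ) (w : Equiv.Perm (Fin n)) : Fin n → ℕ := fun i => Wfun n w (n - 1 - (i : ℕ))

lemma shape_lamOf (w : Equiv.Perm (Fin n)) : IsShape 1 n (lamOf n w) := by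
  constructor
  · intro i j hij
    exact lamN_anti w hij
  · intro i
    rw [one_mul]
    exact lamN_le w i

lemma SOf_eq (w : Equiv.Perm (Fin n)) (i : Fin n) (h : n - 1 - (i : ℕ) < n) :
    SOf n w i = (w ⟨n - 1 - (i : ℕ), h⟩ : ℕ) + 1 := by
  unfold SOf Wfun; rw [dif_pos h]

lemma standard_lamOf (hn : 1 ≤ n) (w : Equiv.Perm (Fin n)) :
    IsStandard (lamOf n w) (SOf n w) := by
  refine ⟨⟨fun i => Wfun_pos w _, ?_⟩, ?_, ?_⟩
  · rintro i j ⟨hij, hlam⟩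
    have h1 : (i : ℕ) + 1 ≤ n - 1 := by have := j.isLt; omega
    have := col_asc w h1 (by
      show lamN n w i = lamN n w ((i : ℕ) + 1)
      rw [hij]; exact hlam)
    unfold SOf
    rw [← hij]
    exact this
  · intro i j hij
    have := Wfun_inj w hij
    have hi := i.isLt; have hj := j.isLt
    exact Fin.ext (by omega)
  · intro i
    exact Wfun_le w (by have := i.isLt; omega)

lemma dinv_lamOf (hn : 1 ≤ n) (w : Equiv.Perm (Fin n)) :
    dinv (lamOf n w) (SOf n w) = 0 := by
  have hempty : {p : Fin n × Fin n |
      Admissible (cell (lamOf n w) p.1) (cell (lamOf n w) p.2) ∧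
        SOf n w p.1 < SOf n w p.2} = ∅ := by
    ext ⟨p1, p2⟩
    simp only [Set.mem_setOf_eq, Set.mem_empty_iff_false, iff_false, not_and]
    intro hadm hlt
    rcases hadm with ⟨hd, hj⟩ | ⟨hd, hj⟩
    · -- same diagonal, lamN p2 < lamN p1 forces p1 < p2 and a decrease
      simp only [cell, lamOf] at hd hj
      have hb : (p1 : ℕ) < (p2 : ℕ) := by
        by_contra hc
        have := lamN_anti w (show (p2 : ℕ) ≤ (p1 : ℕ) by omega)
        omega
      have := run_lt w p2 p1 hb (by have := p2.isLt; omega)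
        (by unfold dN; omega)
      unfold SOf at hlt
      omega
    · simp only [cell, lamOf] at hd hj
      have hb : (p2 : ℕ) < (p1 : ℕ) := by
        by_contra hc
        have := lamN_anti w (show (p1 : ℕ) ≤ (p2 : ℕ) by omega)
        omega
      have := dN_mono w (le_of_lt hb)
      unfold dN at this; omega
  unfold dinv
  rw [hempty]
  exact Set.ncard_empty _

end Aux

section Aux2

variable {n : ℕ}

lemma filter_lt_card (N t : ℕ) (h : t ≤ N) :
    ((Finset.range N).filter (fun k => k < t)).card = t := by
  have : (Finset.range N).filter (fun k => k < t) = Finset.range t := by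
    ext q; simp only [Finset.mem_filter, Finset.mem_range]; omega
  rw [this, Finset.card_range]

lemma lam_sum (hn : 1 ≤ n) (w : Equiv.Perm (Fin n)) :
    (∑ i : Fin n, lamOf n w i) =
      ∑ q ∈ Finset.range (n - 1),
        (if Wfun n w q < Wfun n w (q + 1) then n - 1 - q else 0) := by
  have hfil : ∀ k : ℕ, lamN n w k =
      ∑ q ∈ Finset.range (n - 1),
        (if q < n - 1 - k ∧ Wfun n w q < Wfun n w (q + 1) then 1 else 0) := by
    intro k
    unfold lamN
    rw [show (Finset.range (n - 1 - k)).filter (fun q => Wfun n w q < Wfun n w (q + 1)) =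
        (Finset.range (n - 1)).filter
          (fun q => q < n - 1 - k ∧ Wfun n w q < Wfun n w (q + 1)) by
      ext q
      simp only [Finset.mem_filter, Finset.mem_range]
      constructor
      · rintro ⟨h1, h2⟩; exact ⟨by omega, by omega, h2⟩
      · rintro ⟨h1, h2, h3⟩; exact ⟨by omega, h3⟩]
    exact Finset.card_filter _ _
  calc (∑ i : Fin n, lamOf n w i) = ∑ k ∈ Finset.range n, lamN n w k := by
        exact Fin.sum_univ_eq_sum_range (fun k => lamN n w k) n
    _ = ∑ k ∈ Finset.range n, ∑ q ∈ Finset.range (n - 1),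
          (if q < n - 1 - k ∧ Wfun n w q < Wfun n w (q + 1) then 1 else 0) := by
        exact Finset.sum_congr rfl fun k _ => hfil k
    _ = ∑ q ∈ Finset.range (n - 1), ∑ k ∈ Finset.range n,
          (if q < n - 1 - k ∧ Wfun n w q < Wfun n w (q + 1) then 1 else 0) :=
        Finset.sum_comm
    _ = ∑ q ∈ Finset.range (n - 1),
          (if Wfun n w q < Wfun n w (q + 1) then n - 1 - q else 0) := by
        apply Finset.sum_congr rfl
        intro q hq
        rw [Finset.mem_range] at hq
        by_cases hasc : Wfun n w q < Wfun n w (q + 1)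
        · rw [if_pos hasc]
          have : ∀ k : ℕ, k < n →
              ((q < n - 1 - k ∧ Wfun n w q < Wfun n w (q + 1)) ↔ (k < n - 1 - q)) := by
            intro k hk
            constructor
            · rintro ⟨h1, _⟩; omega
            · intro h1; exact ⟨by omega, hasc⟩
          calc (∑ k ∈ Finset.range n,
                (if q < n - 1 - k ∧ Wfun n w q < Wfun n w (q + 1) then 1 else 0))
              = ∑ k ∈ Finset.range n, (if k < n - 1 - q then 1 else 0) := by
                apply Finset.sum_congr rfl
                intro k hk
                rw [Finset.mem_range] at hk
                exact if_congr (this k hk) rfl rfl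
            _ = n - 1 - q := by
                rw [← Finset.card_filter]
                exact filter_lt_card n (n - 1 - q) (by omega)
        · rw [if_neg hasc]
          apply Finset.sum_eq_zero
          intro k _
          rw [if_neg (by tauto)]

lemma maj_sum (hn : 1 ≤ n) (w : Equiv.Perm (Fin n)) :
    majF (fun i => wzero (w (wzero i))) =
      ∑ q ∈ Finset.range (n - 1),
        (if Wfun n w q < Wfun n w (q + 1) then 0 else n - 1 - q) := by
  obtain ⟨m, rfl⟩ : ∃ m, n = m + 1 := ⟨n - 1, by omega⟩
  set u : Fin (m + 1) → Fin (m + 1) := fun i => wzero (w (wzero i)) with hu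
  have hvals : ∀ (i : ℕ) (h : i < m + 1),
      (u ⟨i, h⟩ : ℕ) + Wfun (m + 1) w (m - i) = m + 1 := by
    intro i h
    have hmi : m - i < m + 1 := by omega
    have e : wzero (⟨i, h⟩ : Fin (m + 1)) = (⟨m - i, hmi⟩ : Fin (m + 1)) :=
      Fin.ext (show m + 1 - 1 - i = m - i by omega)
    have e2 : (u ⟨i, h⟩ : ℕ) = m + 1 - 1 - (w ⟨m - i, hmi⟩ : ℕ) := by
      show (wzero (w (wzero ⟨i, h⟩)) : ℕ) = _
      rw [e]
      rfl
    have e3 : Wfun (m + 1) w (m - i) = (w ⟨m - i, hmi⟩ : ℕ) + 1 := by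
      unfold Wfun; rw [dif_pos hmi]
    have := (w ⟨m - i, hmi⟩).isLt
    omega
  have hWfun_lt : ∀ q : ℕ, q < m + 1 → Wfun (m + 1) w q ≤ m + 1 := fun q hq => Wfun_le w hq
  have hWfun_pos : ∀ q : ℕ, 1 ≤ Wfun (m + 1) w q := fun q => Wfun_pos w q
  have hne : ∀ q : ℕ, q < m → Wfun (m + 1) w q ≠ Wfun (m + 1) w (q + 1) := by
    intro q hq he
    have := Wfun_inj w he
    omega
  have hmem : ∀ q : ℕ, q < m →
      ((m - q ∈ DesF u) ↔ ¬ Wfun (m + 1) w q < Wfun (m + 1) w (q + 1)) := by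
    intro q hq
    have hpf : m - q - 1 < m + 1 := by omega
    have hpg : m - q < m + 1 := by omega
    have hb1 := hWfun_lt q (by omega)
    have hb2 := hWfun_lt (q + 1) (by omega)
    have hne' := hne q hq
    have v1 : (u ⟨m - q, hpg⟩ : ℕ) + Wfun (m + 1) w q = m + 1 := by
      have := hvals (m - q) hpg
      rw [show m - (m - q) = q by omega] at this
      exact this
    have v2 : (u ⟨m - q - 1, hpf⟩ : ℕ) + Wfun (m + 1) w (q + 1) = m + 1 := by
      have := hvals (m - q - 1) hpf
      rw [show m - (m - q - 1) = q + 1 by omega] at this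
      exact this
    constructor
    · rintro ⟨h0, h, hlt⟩
      rw [Fin.lt_def] at hlt
      have hlt2 : (u ⟨m - q, hpg⟩ : ℕ) < (u ⟨m - q - 1, hpf⟩ : ℕ) := hlt
      omega
    · intro hge
      refine ⟨by omega, hpg, ?_⟩
      rw [Fin.lt_def]
      show (u ⟨m - q, hpg⟩ : ℕ) < (u ⟨m - q - 1, hpf⟩ : ℕ)
      omega
  unfold majF
  rw [← Finset.sum_range_reflect (fun i => if i ∈ DesF u then i else 0) (m + 1)]
  rw [Finset.sum_range_succ]
  have hlast : (if (m + 1 - 1 - m ∈ DesF u) then m + 1 - 1 - m else 0) = 0 := by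
    simp
  rw [hlast, add_zero]
  apply Finset.sum_congr rfl
  intro q hq
  rw [Finset.mem_range] at hq
  have e3 : m + 1 - 1 - q = m - q := by omega
  rw [e3]
  by_cases hasc : Wfun (m + 1) w q < Wfun (m + 1) w (q + 1)
  · rw [if_pos hasc, if_neg (by rw [hmem q hq]; exact fun hc => hc hasc)]
  · rw [if_neg hasc, if_pos ((hmem q hq).2 hasc)]

lemma sum_maj (hn : 1 ≤ n) (w : Equiv.Perm (Fin n)) :
    n * (n - 1) / 2 - (∑ i : Fin n, lamOf n w i) =
      majF (fun i => wzero (w (wzero i))) := by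
  have h1 := lam_sum hn w
  have h2 := maj_sum hn w
  have h3 : (∑ i : Fin n, lamOf n w i) + majF (fun i => wzero (w (wzero i))) =
      ∑ q ∈ Finset.range (n - 1), (n - 1 - q) := by
    rw [h1, h2, ← Finset.sum_add_distrib]
    apply Finset.sum_congr rfl
    intro q _
    split <;> omega
  have h4 : ∑ q ∈ Finset.range (n - 1), (n - 1 - q) = ∑ q ∈ Finset.range n, q := by
    obtain ⟨m, rfl⟩ : ∃ m, n = m + 1 := ⟨n - 1, by omega⟩
    have hr := Finset.sum_range_reflect (fun j => (j : ℕ)) (m + 1)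
    rw [← hr, Finset.sum_range_succ]
    simp only [Nat.add_sub_cancel]
    rw [show m - m = 0 by omega, add_zero]
  have h5 : ∑ q ∈ Finset.range n, q = n * (n - 1) / 2 := Finset.sum_range_id n
  omega

end Aux2

section Aux3

variable {n : ℕ}

lemma dLess_iff (w : Equiv.Perm (Fin n)) (i j : Fin n) :
    dLess 1 (cell (lamOf n w) j) (cell (lamOf n w) i) ↔ (i : ℕ) < (j : ℕ) := by
  unfold dLess dm cell lamOf
  simp only [one_mul]
  constructor
  · rintro (h | ⟨h1, h2⟩)
    · by_contra hc
      have := dN_mono w (show (j : ℕ) ≤ (i : ℕ) by omega)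
      unfold dN at this
      omega
    · by_contra hc
      have := lamN_anti w (show (j : ℕ) ≤ (i : ℕ) by omega)
      omega
  · intro hij
    have h1 := dN_mono w (le_of_lt hij)
    unfold dN at h1
    rcases Nat.lt_or_ge ((i : ℕ) + lamN n w i) ((j : ℕ) + lamN n w j) with h | h
    · exact Or.inl h
    · exact Or.inr ⟨by omega, by omega⟩

lemma SOf_row (w : Equiv.Perm (Fin n)) (x : Fin n) :
    SOf n w (wzero x) = (w x : ℕ) + 1 := by
  have hx := x.isLt
  have h1 : n - 1 - ((wzero x : Fin n) : ℕ) < n := by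
    show n - 1 - (n - 1 - (x : ℕ)) < n
    omega
  rw [SOf_eq w (wzero x) h1]
  rw [show (⟨n - 1 - ((wzero x : Fin n) : ℕ), h1⟩ : Fin n) = x from
    Fin.ext (show n - 1 - (n - 1 - (x : ℕ)) = (x : ℕ) by omega)]

lemma dd_eq (hn : 1 ≤ n) (w : Equiv.Perm (Fin n)) :
    ddSet 1 (lamOf n w) (SOf n w) = DesF (fun i => w.symm i) := by
  ext a
  simp only [ddSet, DesF, Set.mem_setOf_eq]
  constructor
  · rintro ⟨i, j, hSi, hSj, hd⟩
    have hij : (i : ℕ) < (j : ℕ) := (dLess_iff w i j).1 hd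
    have hi : n - 1 - (i : ℕ) < n := by have := i.isLt; omega
    have hj : n - 1 - (j : ℕ) < n := by have := j.isLt; omega
    rw [SOf_eq w i hi] at hSi
    rw [SOf_eq w j hj] at hSj
    have h0 : 0 < a := by omega
    have ha : a < n := by have := (w ⟨n - 1 - (j : ℕ), hj⟩).isLt; omega
    refine ⟨h0, ha, ?_⟩
    have e1 : w ⟨n - 1 - (j : ℕ), hj⟩ = ⟨a, ha⟩ :=
      Fin.ext (show ((w ⟨n - 1 - (j : ℕ), hj⟩ : Fin n) : ℕ) = a by omega)
    have e2 : w ⟨n - 1 - (i : ℕ), hi⟩ = ⟨a - 1, by omega⟩ :=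
      Fin.ext (show ((w ⟨n - 1 - (i : ℕ), hi⟩ : Fin n) : ℕ) = a - 1 by omega)
    have s1 : w.symm ⟨a, ha⟩ = ⟨n - 1 - (j : ℕ), hj⟩ := by
      rw [← e1, Equiv.symm_apply_apply]
    have s2 : w.symm ⟨a - 1, by omega⟩ = ⟨n - 1 - (i : ℕ), hi⟩ := by
      rw [← e2, Equiv.symm_apply_apply]
    rw [Fin.lt_def, s1, s2]
    show n - 1 - (j : ℕ) < n - 1 - (i : ℕ)
    have := j.isLt
    omega
  · rintro ⟨h0, h, hlt⟩
    have han : a - 1 < n := by omega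
    have hlt2 : w.symm ⟨a, h⟩ < w.symm ⟨a - 1, han⟩ := hlt
    rw [Fin.lt_def] at hlt2
    refine ⟨wzero (w.symm ⟨a - 1, han⟩), wzero (w.symm ⟨a, h⟩), ?_, ?_, ?_⟩
    · rw [SOf_row w (w.symm ⟨a - 1, han⟩), Equiv.apply_symm_apply]
      show a - 1 + 1 = a
      omega
    · rw [SOf_row w (w.symm ⟨a, h⟩), Equiv.apply_symm_apply]
    · rw [dLess_iff]
      show n - 1 - ((w.symm ⟨a - 1, han⟩ : Fin n) : ℕ) <
        n - 1 - ((w.symm ⟨a, h⟩ : Fin n) : ℕ)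
      have h1 := (w.symm ⟨a - 1, han⟩).isLt
      omega

lemma SOf_injective (hn : 1 ≤ n) : Function.Injective (SOf n) := by
  intro w w' hww
  apply Equiv.ext
  intro q
  have hq := q.isLt
  have h1 : n - 1 - (n - 1 - (q : ℕ)) = (q : ℕ) := by omega
  have h2 : n - 1 - (q : ℕ) < n := by omega
  have := congrFun hww ⟨n - 1 - (q : ℕ), h2⟩
  rw [SOf_eq w _ (by simp only [] ; omega), SOf_eq w' _ (by simp only []; omega)] at this
  apply Fin.ext
  have e : (⟨n - 1 - (n - 1 - (q : ℕ)), by omega⟩ : Fin n) = q := Fin.ext h1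
  rw [e] at this
  omega

end Aux3

section Aux4

variable {n : ℕ}

lemma exists_perm (hn : 1 ≤ n) (lam S : Fin n → ℕ) (hsh : IsShape 1 n lam)
    (hst : IsStandard lam S) (hd : dinv lam S = 0) :
    ∃ w : Equiv.Perm (Fin n), lamOf n w = lam ∧ SOf n w = S := by
  obtain ⟨⟨hpos, hcol⟩, hinj, hle⟩ := hst
  obtain ⟨hmono, hbound⟩ := hsh
  -- dinv = 0 means no admissible pair is increasing
  have hset : {p : Fin n × Fin n |
      Admissible (cell lam p.1) (cell lam p.2) ∧ S p.1 < S p.2} = ∅ := by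
    have hfin : {p : Fin n × Fin n |
        Admissible (cell lam p.1) (cell lam p.2) ∧ S p.1 < S p.2}.Finite :=
      Set.toFinite _
    exact (Set.ncard_eq_zero hfin).1 hd
  have hadm : ∀ p1 p2 : Fin n, Admissible (cell lam p1) (cell lam p2) → ¬ S p1 < S p2 := by
    intro p1 p2 ha hlt
    have : (p1, p2) ∈ ({} : Set (Fin n × Fin n)) := by
      rw [← hset]; exact ⟨ha, hlt⟩
    exact this
  -- steps of lam are at most 1
  have stepA : ∀ (i : Fin n) (h : (i : ℕ) + 1 < n), lam i ≤ lam ⟨(i : ℕ) + 1, h⟩ + 1 := by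
    intro i hi1
    by_contra hcon
    push_neg at hcon
    -- the first row `k3 > i` whose diagonal is at least `D`
    have hKne : (Finset.univ.filter
        (fun k : Fin n => (i : ℕ) < (k : ℕ) ∧
          (i : ℕ) + lam i ≤ (k : ℕ) + lam k)).Nonempty := by
      refine ⟨⟨n - 1, by omega⟩, ?_⟩
      simp only [Finset.mem_filter, Finset.mem_univ, true_and]
      have hb := hbound i
      rw [one_mul] at hb
      constructor
      · show (i : ℕ) < n - 1
        omega
      · show (i : ℕ) + lam i ≤ n - 1 + lam ⟨n - 1, _⟩
        have hb2 := Nat.zero_le (lam ⟨n - 1, by omega⟩)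
        omega
    obtain ⟨k3, hk3mem, hk3min'⟩ :=
      Finset.exists_min_image _ (fun k : Fin n => (k : ℕ)) hKne
    rw [Finset.mem_filter] at hk3mem
    obtain ⟨-, hik3, hDk3⟩ := hk3mem
    have hk3min : ∀ k : Fin n, (i : ℕ) < (k : ℕ) →
        (i : ℕ) + lam i ≤ (k : ℕ) + lam k → (k3 : ℕ) ≤ (k : ℕ) := by
      intro k h1 h2
      refine hk3min' k ?_
      simp only [Finset.mem_filter, Finset.mem_univ, true_and]
      exact ⟨h1, h2⟩
    -- k3 is not i+1
    have hnoti1 : (i : ℕ) + 1 < (k3 : ℕ) := by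
      rcases Nat.lt_or_ge ((i : ℕ) + 1) (k3 : ℕ) with h | h
      · exact h
      · exfalso
        have : (k3 : ℕ) = (i : ℕ) + 1 := by omega
        rw [this] at hDk3
        have : lam k3 = lam ⟨(i : ℕ) + 1, hi1⟩ := by
          congr 1
          exact Fin.ext this
        omega
    have hk3n := k3.isLt
    set k2 : Fin n := ⟨(k3 : ℕ) - 1, by omega⟩ with hk2def
    have hk2v : (k2 : ℕ) = (k3 : ℕ) - 1 := rfl
    have hik2 : (i : ℕ) < (k2 : ℕ) := by omega
    have hk2notin : (k2 : ℕ) + lam k2 < (i : ℕ) + lam i := by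
      by_contra hc
      push_neg at hc
      have := hk3min k2 hik2 hc
      omega
    have hmono23 : lam k3 ≤ lam k2 := hmono k2 k3 (by rw [Fin.le_def]; omega)
    have hE3 : (k3 : ℕ) + lam k3 = (i : ℕ) + lam i := by omega
    have hE2 : (k2 : ℕ) + lam k2 + 1 = (i : ℕ) + lam i := by omega
    have hlameq : lam k2 = lam k3 := by omega
    have hS23 : S k2 < S k3 := hcol k2 k3 ⟨by omega, hlameq⟩
    have hA1 : Admissible (cell lam k2) (cell lam i) := by
      right
      refine ⟨?_, ?_⟩
      · show (i : ℕ) + lam i = (k2 : ℕ) + lam k2 + 1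
        omega
      · show lam k2 < lam i
        omega
    have hA2 : Admissible (cell lam i) (cell lam k3) := by
      left
      refine ⟨?_, ?_⟩
      · show (k3 : ℕ) + lam k3 = (i : ℕ) + lam i
        omega
      · show lam k3 < lam i
        omega
    have hb1 := hadm k2 i hA1
    have hb2 := hadm i k3 hA2
    omega
  -- dichotomy with tableau inequalities
  have hstepcases : ∀ (i : Fin n) (h : (i : ℕ) + 1 < n),
      (lam i = lam ⟨(i : ℕ) + 1, h⟩ + 1 ∧ S ⟨(i : ℕ) + 1, h⟩ < S i) ∨
      (lam i = lam ⟨(i : ℕ) + 1, h⟩ ∧ S i < S ⟨(i : ℕ) + 1, h⟩) := by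
    intro i h
    have h1 := stepA i h
    have h2 : lam ⟨(i : ℕ) + 1, h⟩ ≤ lam i := hmono i _ (by rw [Fin.le_def]; simp only []; omega)
    rcases Nat.lt_or_ge (lam ⟨(i : ℕ) + 1, h⟩) (lam i) with hc | hc
    · left
      have hl : lam i = lam ⟨(i : ℕ) + 1, h⟩ + 1 := by omega
      have hA : Admissible (cell lam i) (cell lam ⟨(i : ℕ) + 1, h⟩) := by
        left
        refine ⟨?_, ?_⟩
        · show (i : ℕ) + 1 + lam ⟨(i : ℕ) + 1, h⟩ = (i : ℕ) + lam i
          omega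
        · show lam ⟨(i : ℕ) + 1, h⟩ < lam i
          exact hc
      have := hadm i _ hA
      have hne : S i ≠ S ⟨(i : ℕ) + 1, h⟩ := by
        intro he
        have := hinj he
        have := congrArg Fin.val this
        simp only [] at this
        omega
      exact ⟨hl, by omega⟩
    · right
      have hl : lam i = lam ⟨(i : ℕ) + 1, h⟩ := by omega
      exact ⟨hl, hcol i _ ⟨rfl, hl⟩⟩
  -- build the permutation
  have hfb : ∀ q : Fin n, n - 1 - (q : ℕ) < n := by intro q; omega
  let f : Fin n → Fin n := fun q =>
    ⟨S ⟨n - 1 - (q : ℕ), hfb q⟩ - 1, by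
      have h1 := hle ⟨n - 1 - (q : ℕ), hfb q⟩
      have h2 := hpos ⟨n - 1 - (q : ℕ), hfb q⟩
      omega⟩
  have hfinj : Function.Injective f := by
    intro a b hab
    have hab' : S ⟨n - 1 - (a : ℕ), hfb a⟩ - 1 = S ⟨n - 1 - (b : ℕ), hfb b⟩ - 1 :=
      congrArg Fin.val hab
    have h1 := hpos ⟨n - 1 - (a : ℕ), hfb a⟩
    have h2 := hpos ⟨n - 1 - (b : ℕ), hfb b⟩
    have : S ⟨n - 1 - (a : ℕ), hfb a⟩ = S ⟨n - 1 - (b : ℕ), hfb b⟩ := by omega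
    have := congrArg Fin.val (hinj this)
    simp only [] at this
    have ha := a.isLt; have hb := b.isLt
    exact Fin.ext (by omega)
  let w : Equiv.Perm (Fin n) := Equiv.ofBijective f (Finite.injective_iff_bijective.mp hfinj)
  have hwv : ∀ (q : ℕ) (hq : q < n), (w ⟨q, hq⟩ : ℕ) = S ⟨n - 1 - q, by omega⟩ - 1 := by
    intro q hq
    rfl
  have hSOf : SOf n w = S := by
    funext i
    rw [SOf_eq w i (hfb i)]
    rw [hwv _ (hfb i)]
    have h1 : n - 1 - (n - 1 - (i : ℕ)) = (i : ℕ) := by have := i.isLt; omega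
    have e : (⟨n - 1 - (n - 1 - (i : ℕ)), by omega⟩ : Fin n) = i := Fin.ext h1
    rw [e]
    have := hpos i
    omega
  have hWS : ∀ (q : ℕ), q < n → Wfun n w q = S ⟨n - 1 - q, by omega⟩ := by
    intro q hq
    unfold Wfun
    rw [dif_pos hq, hwv q hq]
    have := hpos ⟨n - 1 - q, by omega⟩
    omega
  have key : ∀ m : ℕ, ∀ i : Fin n, n - 1 - (i : ℕ) ≤ m → lamN n w (i : ℕ) = lam i := by
    intro m
    induction m with
    | zero =>
      intro i hi
      have hin := i.isLt
      have h1 : lamN n w (i : ℕ) = 0 := by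
        unfold lamN
        rw [show n - 1 - (i : ℕ) = 0 by omega]
        simp
      have h2 := hbound i
      rw [one_mul] at h2
      omega
    | succ m ih =>
      intro i hi
      by_cases hc : n - 1 - (i : ℕ) ≤ m
      · exact ih i hc
      · have hieq : n - 1 - (i : ℕ) = m + 1 := by omega
        have hin := i.isLt
        have hi1 : (i : ℕ) + 1 < n := by omega
        have hIH : lamN n w ((i : ℕ) + 1) = lam ⟨(i : ℕ) + 1, hi1⟩ := by
          have := ih ⟨(i : ℕ) + 1, hi1⟩ (by simp only []; omega)
          exact this
        have hs := lamN_succ w (k := (i : ℕ)) (by omega)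
        have e1 : Wfun n w (n - 2 - (i : ℕ)) = S ⟨(i : ℕ) + 1, hi1⟩ := by
          rw [hWS _ (by omega)]
          congr 1
          exact Fin.ext (by simp only []; omega)
        have e2 : Wfun n w ((n - 2 - (i : ℕ)) + 1) = S i := by
          rw [hWS _ (by omega)]
          congr 1
          exact Fin.ext (by simp only []; omega)
        rcases hstepcases i hi1 with ⟨hl, hSlt⟩ | ⟨hl, hSlt⟩
        · rw [if_pos (by rw [e1, e2]; exact hSlt)] at hs
          omega
        · rw [if_neg (by rw [e1, e2]; omega)] at hs
          omega
  refine ⟨w, funext fun i => key (n - 1) i (by omega), hSOf⟩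

end Aux4


/-- `D_n(z;0,t) = Σ_{λ⊆δ_n} Σ_{S : dinv S = 0} t^{|δ_n/λ|} Q_{n,dd(S)}(z)
  = Σ_{w ∈ S_n} t^{maj(w_0 w w_0)} Q_{n,Des(w⁻¹)}(z)`,
stated coefficientwise in `t^s` and in the monomial of content `c`. -/
theorem statement8 (n : ℕ) (hn : 1 ≤ n) (s : ℕ) (c : ℕ → ℕ) :
    Set.ncard {x : ((Fin n → ℕ) × (Fin n → ℕ)) × (Fin n → ℕ) |
      IsShape 1 n x.1.1 ∧ IsStandard x.1.1 x.1.2 ∧ dinv x.1.1 x.1.2 = 0 ∧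
      n * (n - 1) / 2 - (∑ i, x.1.1 i) = s ∧
      IsPosWord n (ddSet 1 x.1.1 x.1.2) x.2 ∧
      (∀ b : ℕ, Set.ncard {i : Fin n | x.2 i = b + 1} = c b)} =
    Set.ncard {y : Equiv.Perm (Fin n) × (Fin n → ℕ) |
      majF (fun i => wzero (y.1 (wzero i))) = s ∧
      IsPosWord n (DesF (fun i => y.1.symm i)) y.2 ∧
      (∀ b : ℕ, Set.ncard {i : Fin n | y.2 i = b + 1} = c b)} := by
  classical
  set G : Equiv.Perm (Fin n) × (Fin n → ℕ) →
      ((Fin n → ℕ) × (Fin n → ℕ)) × (Fin n → ℕ) :=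
    fun y => ((lamOf n y.1, SOf n y.1), y.2) with hG
  have hGinj : Function.Injective G := by
    intro y y' h
    simp only [hG, Prod.mk.injEq] at h
    obtain ⟨⟨h1, h2⟩, h3⟩ := h
    exact Prod.ext (SOf_injective hn h2) h3
  have himg : {x : ((Fin n → ℕ) × (Fin n → ℕ)) × (Fin n → ℕ) |
      IsShape 1 n x.1.1 ∧ IsStandard x.1.1 x.1.2 ∧ dinv x.1.1 x.1.2 = 0 ∧
      n * (n - 1) / 2 - (∑ i, x.1.1 i) = s ∧
      IsPosWord n (ddSet 1 x.1.1 x.1.2) x.2 ∧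
      (∀ b : ℕ, Set.ncard {i : Fin n | x.2 i = b + 1} = c b)} =
      G '' {y : Equiv.Perm (Fin n) × (Fin n → ℕ) |
      majF (fun i => wzero (y.1 (wzero i))) = s ∧
      IsPosWord n (DesF (fun i => y.1.symm i)) y.2 ∧
      (∀ b : ℕ, Set.ncard {i : Fin n | y.2 i = b + 1} = c b)} := by
    ext x
    simp only [Set.mem_setOf_eq, Set.mem_image]
    constructor
    · rintro ⟨hsh, hst, hdv, hsz, hpw, hct⟩
      obtain ⟨w, hlam, hS⟩ := exists_perm hn x.1.1 x.1.2 hsh hst hdv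
      refine ⟨(w, x.2), ⟨?_, ?_, hct⟩, ?_⟩
      · have := sum_maj hn w
        rw [hlam] at this
        show majF (fun i => wzero (w (wzero i))) = s
        rw [← this]
        exact hsz
      · have := dd_eq hn w
        rw [hlam, hS] at this
        show IsPosWord n (DesF (fun i => w.symm i)) x.2
        rw [← this]
        exact hpw
      · show ((lamOf n w, SOf n w), x.2) = x
        rw [hlam, hS]
    · rintro ⟨y, ⟨hmaj, hpw, hct⟩, rfl⟩
      refine ⟨shape_lamOf y.1, standard_lamOf hn y.1, dinv_lamOf hn y.1, ?_, ?_, hct⟩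
      · rw [sum_maj hn y.1]
        exact hmaj
      · rw [dd_eq hn y.1]
        exact hpw
  rw [himg, Set.ncard_image_of_injOn (Function.Injective.injOn hGinj)]


end HHL
end

section
/- For every partition λ ⊆ δ_n, the number of cells x ∈ λ with l(x) ≤ a(x) ≤ l(x)+1 equals the number of admissible ordered pairs (x,y) of cells of the vertical strip (λ+(1^n))/λ (equivalently, equals dinv of the super tableau of shape (λ+(1^n))/λ all of whose entries equal the negative letter 1̄, so that every admissible pair is a d-inversion). -/
open Classical

namespace HHL

/-!
Write `rowDiag i = i + λ_{i+1}` for the diagonal `d` of the strip cell `x_i`, and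
`colDiag j = j + λ'_{j+1}` for the diagonal of the cell just above column `j`. A cell `(i, j)`
of `λ` has `l ≤ a ≤ l + 1` iff `colDiag j ∈ {rowDiag i, rowDiag i - 1}`, and the admissible
pairs are, once sorted, the pairs `i < i'` with `rowDiag i' ∈ {rowDiag i, rowDiag i - 1}`.
So row by row it suffices that the labels `rowDiag i'` (`i' > i`) and `colDiag j` (`j < λ_{i+1}`)
take every value `v ≤ rowDiag i` equally often. They label the down and the right steps of the
boundary of `λ` from `(n, 0)` to `(i + 1, λ_{i+1})`, along which `row + column` moves by unit
steps from `n` to `rowDiag i + 1`; hence, as multisets, the down labels are the right labels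
plus the interval `(rowDiag i, n)`.
-/

section

open Finset

variable {n : ℕ}

theorem ncard_iUnion_singleton_prod {α β γ : Type*} [Fintype α] (e : α ↪ β)
    (s : α → Finset γ) : (⋃ a, {e a} ×ˢ (s a : Set γ)).ncard = ∑ a, #(s a) := by
  let f : (Σ _ : α, γ) ↪ β × γ :=
    ⟨fun x => (e x.1, x.2), fun ⟨a, c⟩ ⟨a', c'⟩ h => by simp_all [Prod.ext_iff]⟩
  have : ⋃ a, {e a} ×ˢ (s a : Set γ) = ↑((univ.sigma s).map f) := by
    ext ⟨b, c⟩
    simp only [Set.mem_iUnion, Set.mem_prod, Set.mem_singleton_iff, mem_coe, mem_map, mem_sigma,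
      mem_univ, true_and]
    constructor
    · rintro ⟨a, rfl, hc⟩
      exact ⟨⟨a, c⟩, hc, rfl⟩
    · rintro ⟨⟨a, c⟩, hc, h⟩
      obtain ⟨rfl, rfl⟩ := Prod.ext_iff.1 h
      exact ⟨a, rfl, hc⟩
  rw [this, Set.ncard_coe_finset, card_map, card_sigma]

variable (lam : Fin n → ℕ)

def rowDiag (i : Fin n) : ℕ := i + lam i

noncomputable def colDiag (j : ℕ) : ℕ := j + conjPart lam (j + 1)

variable {lam}

theorem IsShape.rowDiag_lt (hlam : IsShape 1 n lam) (i : Fin n) : rowDiag lam i < n := by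
  have := hlam.2 i
  have := i.isLt
  unfold rowDiag
  omega

theorem le_conjPart (hanti : Antitone lam) {i : Fin n} {j : ℕ} (hj : j < lam i) :
    (i : ℕ) + 1 ≤ conjPart lam (j + 1) :=
  calc (i : ℕ) + 1 = (Set.Iic i).ncard := by
        rw [← coe_Iic, Set.ncard_coe_finset, Fin.card_Iic]
    _ ≤ conjPart lam (j + 1) :=
        Set.ncard_le_ncard (fun _ hi' => hj.trans_le (hanti hi')) (Set.toFinite _)

theorem conjPart_eq_of_lt_of_le (hanti : Antitone lam) {i : Fin n} {j : ℕ} (hj : j < lam i)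
    (hle : ∀ i', i < i' → lam i' ≤ j) : conjPart lam (j + 1) = (i : ℕ) + 1 := by
  have : {i' : Fin n | j + 1 ≤ lam i'} = Set.Iic i := by
    ext i'
    simp only [Set.mem_ofPred_eq, Set.mem_Iic]
    refine ⟨fun h => ?_, fun h => hj.trans_le (hanti h)⟩
    by_contra hlt
    have := hle i' (not_le.1 hlt)
    omega
  rw [conjPart, this, ← coe_Iic, Set.ncard_coe_finset, Fin.card_Iic]

theorem colDiag_eq_of_mem_Ico (hanti : Antitone lam) {i i' : Fin n} (hi' : (i' : ℕ) = i + 1)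
    {j : ℕ} (hj : j ∈ Ico (lam i') (lam i)) : colDiag lam j = j + (i + 1) := by
  rw [mem_Ico] at hj
  rw [colDiag, conjPart_eq_of_lt_of_le hanti hj.2]
  intro i'' hi''
  rw [Fin.lt_def] at hi''
  exact (hanti (Fin.le_def.2 (by omega))).trans hj.1

theorem leg_le_arm_le_leg_add_one_iff (hanti : Antitone lam) {i : Fin n} {j : ℕ}
    (hj : j < lam i) :
    (conjPart lam (j + 1) - 1 - i ≤ lam i - 1 - j ∧
      lam i - 1 - j ≤ conjPart lam (j + 1) - 1 - i + 1) ↔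
      colDiag lam j = rowDiag lam i ∨ colDiag lam j + 1 = rowDiag lam i := by
  have := le_conjPart hanti hj
  unfold colDiag rowDiag
  omega

theorem admissible_cell_iff (hanti : Antitone lam) {p q : Fin n} :
    Admissible (cell lam p) (cell lam q) ↔
      (p < q ∧ rowDiag lam q = rowDiag lam p) ∨ (q < p ∧ rowDiag lam q = rowDiag lam p + 1) := by
  have hpq : p ≤ q → lam q ≤ lam p := fun h => hanti h
  have hqp : q ≤ p → lam p ≤ lam q := fun h => hanti h
  simp only [Admissible, cell, rowDiag, Fin.lt_def, Fin.le_def] at *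
  omega

theorem sum_Ioi_rowDiag {M : Type*} [AddCommMonoid M] (hanti : Antitone lam)
    (hlt : ∀ i, rowDiag lam i < n) (f : ℕ → M) (i₀ : Fin n) :
    ∑ i ∈ Ioi i₀, f (rowDiag lam i) =
      ∑ j ∈ range (lam i₀), f (colDiag lam j) + ∑ v ∈ Ioo (rowDiag lam i₀) n, f v := by
  obtain ⟨k, hk⟩ : ∃ k, (i₀ : ℕ) + k + 1 = n := ⟨n - i₀ - 1, by omega⟩
  induction k generalizing i₀ with
  | zero =>
    have hlt₀ := hlt i₀
    unfold rowDiag at hlt₀ ⊢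
    have hIoi : Ioi i₀ = ∅ := by
      ext i
      simp only [mem_Ioi, Fin.lt_def, notMem_empty, iff_false]
      omega
    have hIoo : Ioo (i₀ + lam i₀) n = ∅ := by
      ext v
      simp only [mem_Ioo, notMem_empty, iff_false]
      omega
    rw [hIoi, hIoo, show lam i₀ = 0 by omega, range_zero]
    simp
  | succ k ih =>
    set i₁ : Fin n := ⟨i₀ + 1, by omega⟩
    have hmono : lam i₁ ≤ lam i₀ := hanti (Fin.le_def.2 (by simp [i₁]))
    have hlt₀ := hlt i₀
    have hD₀ : rowDiag lam i₀ + 1 = lam i₀ + (i₀ + 1) := by unfold rowDiag; omega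
    have hD₁ : rowDiag lam i₁ = lam i₁ + (i₀ + 1) := by unfold rowDiag; simp only [i₁]; omega
    have hIoi : Ioi i₀ = cons i₁ (Ioi i₁) (by simp) := by
      ext i
      simp only [mem_Ioi, mem_cons, Fin.lt_def, Fin.ext_iff, i₁]
      omega
    calc ∑ i ∈ Ioi i₀, f (rowDiag lam i)
        = f (rowDiag lam i₁) + ∑ i ∈ Ioi i₁, f (rowDiag lam i) := by rw [hIoi, sum_cons]
      _ = ∑ j ∈ range (lam i₁), f (colDiag lam j) + ∑ v ∈ Ico (rowDiag lam i₁) n, f v := by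
        rw [ih i₁ (by simp only [i₁]; omega), sum_eq_sum_Ico_succ_bot (hlt i₁),
          Ico_add_one_left_eq_Ioo]
        abel
      _ = ∑ j ∈ range (lam i₁), f (colDiag lam j) + ∑ j ∈ Ico (lam i₁) (lam i₀), f (colDiag lam j)
            + ∑ v ∈ Ioo (rowDiag lam i₀) n, f v := by
        rw [sum_congr rfl fun j hj => congrArg f (colDiag_eq_of_mem_Ico hanti rfl hj), sum_Ico_add', add_assoc,
          ← Ico_add_one_left_eq_Ioo, hD₀, hD₁, sum_Ico_consecutive _ (by omega) (by omega)]
      _ = ∑ j ∈ range (lam i₀), f (colDiag lam j) + ∑ v ∈ Ioo (rowDiag lam i₀) n, f v := by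
        rw [range_eq_Ico, range_eq_Ico, sum_Ico_consecutive _ (Nat.zero_le _) hmono]

theorem card_filter_Ioi_rowDiag (hanti : Antitone lam) (hlt : ∀ i, rowDiag lam i < n)
    (p : ℕ → Prop) [DecidablePred p] (i₀ : Fin n) (hp : ∀ v, rowDiag lam i₀ < v → ¬ p v) :
    #((Ioi i₀).filter fun i => p (rowDiag lam i)) =
      #((range (lam i₀)).filter fun j => p (colDiag lam j)) := by
  simp only [card_filter]
  rw [sum_Ioi_rowDiag hanti hlt (fun v => if p v then 1 else 0),
    sum_eq_zero fun v hv => if_neg (hp v (mem_Ioo.1 hv).1), add_zero]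

theorem ncard_hookCells_eq_sum (hanti : Antitone lam) :
    Set.ncard {x : ℕ × ℕ | ∃ i : Fin n, (i : ℕ) = x.1 ∧ x.2 < lam i ∧
      conjPart lam (x.2 + 1) - 1 - x.1 ≤ lam i - 1 - x.2 ∧
      lam i - 1 - x.2 ≤ (conjPart lam (x.2 + 1) - 1 - x.1) + 1} =
    ∑ i, #((range (lam i)).filter fun j =>
      colDiag lam j = rowDiag lam i ∨ colDiag lam j + 1 = rowDiag lam i) := by
  rw [← ncard_iUnion_singleton_prod Fin.valEmbedding]
  congr 1
  ext ⟨r, j⟩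
  simp only [Set.mem_ofPred_eq, Set.mem_iUnion, Set.mem_prod, Set.mem_singleton_iff, mem_coe,
    mem_filter, mem_range, Fin.valEmbedding_apply]
  refine exists_congr fun i => ⟨?_, ?_⟩
  · rintro ⟨rfl, hj, hhook⟩
    exact ⟨rfl, hj, (leg_le_arm_le_leg_add_one_iff hanti hj).1 hhook⟩
  · rintro ⟨rfl, hj, hdiag⟩
    exact ⟨rfl, hj, (leg_le_arm_le_leg_add_one_iff hanti hj).2 hdiag⟩

theorem ncard_admissible_eq_sum (hanti : Antitone lam) :
    Set.ncard {p : Fin n × Fin n | Admissible (cell lam p.1) (cell lam p.2)} =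
    ∑ i, #((Ioi i).filter fun i' =>
      rowDiag lam i' = rowDiag lam i ∨ rowDiag lam i' + 1 = rowDiag lam i) := by
  rw [← ncard_iUnion_singleton_prod (Function.Embedding.refl _)]
  have hmem : ∀ p q : Fin n, (p, q) ∈ ⋃ i, {Function.Embedding.refl _ i} ×ˢ
      (((Ioi i).filter fun i' =>
        rowDiag lam i' = rowDiag lam i ∨ rowDiag lam i' + 1 = rowDiag lam i : Finset _) : Set _) ↔
      p < q ∧ (rowDiag lam q = rowDiag lam p ∨ rowDiag lam q + 1 = rowDiag lam p) := by
    simp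
  refine Set.ncard_congr (fun pq _ => if pq.1 < pq.2 then pq else pq.swap) ?_ ?_ ?_
  · rintro ⟨p, q⟩ h
    simp only [Set.mem_ofPred_eq, admissible_cell_iff hanti] at h
    dsimp only
    split_ifs with hlt
    · rw [hmem]; omega
    · rw [Prod.swap_prod_mk, hmem]; omega
  · rintro ⟨p, q⟩ ⟨p', q'⟩ h h' he
    simp only [Set.mem_ofPred_eq, admissible_cell_iff hanti] at h h'
    dsimp only at he
    split_ifs at he <;> simp only [Prod.swap_prod_mk, Prod.mk.injEq] at he <;>
      obtain ⟨rfl, rfl⟩ := he <;> first | rfl | omega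
  · rintro ⟨p, q⟩ h
    rw [hmem] at h
    by_cases hD : rowDiag lam q = rowDiag lam p
    · exact ⟨(p, q), by simp only [Set.mem_ofPred_eq, admissible_cell_iff hanti]; omega, if_pos h.1⟩
    · refine ⟨(q, p), by simp only [Set.mem_ofPred_eq, admissible_cell_iff hanti]; omega, ?_⟩
      simp [not_lt.2 h.1.le]

end

theorem statement9_general (n : ℕ) (lam : Fin n → ℕ) (hlam : IsShape 1 n lam) :
    Set.ncard {x : ℕ × ℕ | ∃ i : Fin n, (i : ℕ) = x.1 ∧ x.2 < lam i ∧
      conjPart lam (x.2 + 1) - 1 - x.1 ≤ lam i - 1 - x.2 ∧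
      lam i - 1 - x.2 ≤ (conjPart lam (x.2 + 1) - 1 - x.1) + 1} =
    Set.ncard {p : Fin n × Fin n | Admissible (cell lam p.1) (cell lam p.2)} := by
  rw [ncard_hookCells_eq_sum hlam.1, ncard_admissible_eq_sum hlam.1]
  refine Fintype.sum_congr _ _ fun i => (card_filter_Ioi_rowDiag hlam.1 hlam.rowDiag_lt
    (fun v => v = rowDiag lam i ∨ v + 1 = rowDiag lam i) i fun v hv => ?_).symm
  omega

/-- `b(λ) = dinv(λ)`: the number of cells `x ∈ λ` with `l(x) ≤ a(x) ≤ l(x)+1`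
equals the number of admissible ordered pairs of cells of the vertical strip
`(λ+(1^n))/λ` (that is, the `dinv` of the all-`1̄` super tableau, for which
every admissible pair is a d-inversion). -/
theorem statement9 (n : ℕ) (hn : 1 ≤ n) (lam : Fin n → ℕ) (hlam : IsShape 1 n lam) :
    Set.ncard {x : ℕ × ℕ | ∃ i : Fin n, (i : ℕ) = x.1 ∧ x.2 < lam i ∧
      conjPart lam (x.2 + 1) - 1 - x.1 ≤ lam i - 1 - x.2 ∧
      lam i - 1 - x.2 ≤ (conjPart lam (x.2 + 1) - 1 - x.1) + 1} =
    Set.ncard {p : Fin n × Fin n | Admissible (cell lam p.1) (cell lam p.2)} :=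
  statement9_general n lam hlam

end HHL
end

section
/- Fix m ≥ 1 and let λ ⊆ mδ_n be a partition. The generating function D_n^{(m),λ}(z;q) = Σ_T q^{dinv_m(T)} z^T, summed over all semistandard tableaux T of shape (λ+(1^n))/λ with z^T = Π_x z_{T(x)}, is a symmetric function of z = (z_1, z_2, …). Equivalently: for any two finite sequences μ and ν of positive integers with total sum n that are rearrangements of one another, Σ_{T of content μ} q^{dinv_m(T)} = Σ_{T of content ν} q^{dinv_m(T)}. -/
/-!
Merging the letters `a` and `a + 1` of a tableau `T` into `a` gives a tableau `σ`, and `T` is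
recovered from `σ` and the set `W` of cells that held `a + 1`. The statistic splits as
`dinv_m T = dinv_m σ + asc W`, where `asc W` counts the edges `(u, v)` with `u ∉ W` and `v ∈ W`
of a graph on the cells of `σ` filled with `a`: ordering cells by `(d_m, row)`
lexicographically, the edges join cells less than `(m, 0)` apart, so the edge set is convex for
this order. Column strictness adds locks: two cells stacked in a column must hold `a` below and
`a + 1` above.

For a convex edge set, the `W` of size `p` and those of size `|V| - p` have the same distribution
of ascents (the two-letter case of the symmetry of chromatic quasisymmetric functions of unit
interval orders). Induct on the number of edges: the edge `(s, t)` with `t` maximal and `s`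
minimal among the lower neighbours of `t` becomes a lock once deleted, and a lock can be removed
with its two vertices, which cost exactly one ascent per vertex between them. So exchanging the
multiplicities of two adjacent letters preserves the distribution of `dinv_m`, and such exchanges
generate all rearrangements.
-/

open Classical

theorem Set.ncard_eq_of_ncard_inter_preimage_eq {α β : Type*} {f : α → β}
    (hf : ∀ b, (f ⁻¹' {b}).Finite) {s t : Set α}
    (h : ∀ b, (s ∩ f ⁻¹' {b}).ncard = (t ∩ f ⁻¹' {b}).ncard) : s.ncard = t.ncard := by
  have fiber (u : Set α) (b : β) : {x : u // f x = b} ≃ ↥(u ∩ f ⁻¹' {b}) :=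
    Equiv.subtypeSubtypeEquivSubtypeInter (· ∈ u) (f · = b)
  have e (b : β) : {x : s // f x = b} ≃ {x : t // f x = b} := by
    have := ((hf b).subset Set.inter_subset_right : (s ∩ f ⁻¹' {b}).Finite).to_subtype
    have := ((hf b).subset Set.inter_subset_right : (t ∩ f ⁻¹' {b}).Finite).to_subtype
    refine (fiber s b).trans ((Finite.card_eq.mp ?_).some.trans (fiber t b).symm)
    rw [Nat.card_coe_set_eq, Nat.card_coe_set_eq, h]
  rw [← Nat.card_coe_set_eq, ← Nat.card_coe_set_eq]
  exact Nat.card_congr (Equiv.ofFiberEquiv e)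

theorem List.getD_append_cons_cons_swap {α : Type*} (l l' : List α) (x y d : α) (b : ℕ) :
    (l ++ x :: y :: l').getD b d =
      (l ++ y :: x :: l').getD (Equiv.swap l.length (l.length + 1) b) d := by
  rw [Equiv.swap_apply_def]
  split_ifs with h₁ h₂
  · simp [h₁]
  · simp [h₂]
  · rcases lt_or_gt_of_ne h₁ with h | h
    · rw [List.getD_append _ _ _ _ h, List.getD_append _ _ _ _ h]
    · rw [List.getD_append_right _ _ _ _ h.le, List.getD_append_right _ _ _ _ h.le,
        show b - l.length = b - l.length - 2 + 1 + 1 by omega]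
      rfl

open Finset

section ConvexGraph

variable {α β : Type*} [DecidableEq α] [LinearOrder β]

def ascents (E : Finset (α × α)) (W : Finset α) : ℕ :=
  #{e ∈ E | e.1 ∉ W ∧ e.2 ∈ W}

structure IsConvexGraph (κ : α → β) (V : Finset α) (E : Finset (α × α)) : Prop where
  fst_mem : ∀ e ∈ E, e.1 ∈ V
  snd_mem : ∀ e ∈ E, e.2 ∈ V
  lt : ∀ e ∈ E, κ e.1 < κ e.2
  convex : ∀ e ∈ E, ∀ w ∈ V, κ e.1 < κ w → κ w < κ e.2 →
    (e.1, w) ∈ E ∧ (w, e.2) ∈ E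

structure IsLock (κ : α → β) (V : Finset α) (E : Finset (α × α)) (l : α × α) :
    Prop where
  fst_mem : l.1 ∈ V
  snd_mem : l.2 ∈ V
  lt : κ l.1 < κ l.2
  fst_edge_iff : ∀ u ∈ V, (l.1, u) ∈ E ↔ κ l.1 < κ u ∧ κ u < κ l.2
  snd_edge_iff : ∀ u ∈ V, (u, l.2) ∈ E ↔ κ l.1 < κ u ∧ κ u < κ l.2

def lockedSets (V : Finset α) (E L : Finset (α × α)) (p k : ℕ) : Finset (Finset α) :=
  {W ∈ V.powerset | (∀ l ∈ L, l.1 ∉ W ∧ l.2 ∈ W) ∧ #W = p ∧ ascents E W = k}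

def inducedEdges (E : Finset (α × α)) (U : Finset α) : Finset (α × α) :=
  {e ∈ E | e.1 ∈ U ∧ e.2 ∈ U}

variable {κ : α → β} {V W : Finset α} {E L : Finset (α × α)}

theorem mem_lockedSets {p k : ℕ} :
    W ∈ lockedSets V E L p k ↔
      W ⊆ V ∧ (∀ l ∈ L, l.1 ∉ W ∧ l.2 ∈ W) ∧ #W = p ∧ ascents E W = k := by
  simp [lockedSets]

theorem ascents_congr {W' : Finset α}
    (h : ∀ e ∈ E, (e.1 ∈ W ↔ e.1 ∈ W') ∧ (e.2 ∈ W ↔ e.2 ∈ W')) :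
    ascents E W = ascents E W' := by
  unfold ascents
  congr 1
  refine filter_congr fun e he => ?_
  rw [(h e he).1, (h e he).2]

theorem ascents_inducedEdges_insert {U : Finset α} {t : α} (ht : t ∉ U) :
    ascents (inducedEdges E U) (insert t W) = ascents (inducedEdges E U) W := by
  refine ascents_congr fun e he => ?_
  obtain ⟨-, h1, h2⟩ := mem_filter.mp he
  simp [mem_insert, ne_of_mem_of_not_mem h1 ht, ne_of_mem_of_not_mem h2 ht]

theorem ascents_erase (W : Finset α) {e : α × α} (he : e ∈ E) :
    ascents E W = ascents (E.erase e) W + if e.1 ∉ W ∧ e.2 ∈ W then 1 else 0 := by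
  unfold ascents
  conv_lhs => rw [← insert_erase he, filter_insert]
  split_ifs <;> simp

theorem ascents_eq_sum [Fintype α] (E : Finset (α × α)) (W : Finset α) :
    ascents E W = ∑ e, if e ∈ E ∧ e.1 ∉ W ∧ e.2 ∈ W then 1 else 0 := by
  simp only [ascents, card_filter, ite_and, sum_ite_mem, univ_inter]

theorem IsConvexGraph.induced (hG : IsConvexGraph κ V E) {U : Finset α} (hU : U ⊆ V) :
    IsConvexGraph κ U (inducedEdges E U) where
  fst_mem e he := (mem_filter.mp he).2.1
  snd_mem e he := (mem_filter.mp he).2.2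
  lt e he := hG.lt e (mem_filter.mp he).1
  convex e he w hw h1 h2 := by
    obtain ⟨he, h1U, h2U⟩ := mem_filter.mp he
    obtain ⟨hA, hB⟩ := hG.convex e he w (hU hw) h1 h2
    exact ⟨mem_filter.mpr ⟨hA, h1U, hw⟩, mem_filter.mpr ⟨hB, hw, h2U⟩⟩

theorem IsLock.induced {l : α × α} (hl : IsLock κ V E l) {U : Finset α} (hU : U ⊆ V)
    (h1 : l.1 ∈ U) (h2 : l.2 ∈ U) : IsLock κ U (inducedEdges E U) l where
  fst_mem := h1
  snd_mem := h2
  lt := hl.lt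
  fst_edge_iff u hu := by simp [inducedEdges, h1, hu, hl.fst_edge_iff u (hU hu)]
  snd_edge_iff u hu := by simp [inducedEdges, h2, hu, hl.snd_edge_iff u (hU hu)]

theorem IsLock.ascents_eq (hG : IsConvexGraph κ V E) {s t : α} (hl : IsLock κ V E (s, t))
    (hs : s ∉ W) (ht : t ∈ W) :
    ascents E W = #{u ∈ V | κ s < κ u ∧ κ u < κ t} +
      ascents (inducedEdges E (V \ {s, t})) W := by
  unfold ascents inducedEdges
  rw [← card_filter_add_card_filter_not (fun e => e.1 = s ∨ e.2 = t), filter_filter,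
    filter_filter]
  congr 1
  -- an ascent at the lock is `(s, u)` with `u ∈ W` or `(u, t)` with `u ∉ W`, `u` in between
  · rw [← card_image_of_injOn (f := fun u => if u ∈ W then (s, u) else (u, t))]
    · congr 1
      ext ⟨a, b⟩
      simp only [mem_filter, mem_image]
      constructor
      · rintro ⟨he, ⟨ha, hb⟩, rfl | rfl⟩
        · exact ⟨b, ⟨hG.snd_mem _ he, (hl.fst_edge_iff b (hG.snd_mem _ he)).mp he⟩,
            by simp [hb]⟩
        · exact ⟨a, ⟨hG.fst_mem _ he, (hl.snd_edge_iff a (hG.fst_mem _ he)).mp he⟩,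
            by simp [ha]⟩
      · rintro ⟨u, ⟨hu, hbetw⟩, h⟩
        by_cases huW : u ∈ W
        · simp only [huW, if_true, Prod.mk.injEq] at h
          obtain ⟨rfl, rfl⟩ := h
          exact ⟨(hl.fst_edge_iff u hu).mpr hbetw, ⟨hs, huW⟩, Or.inl rfl⟩
        · simp only [huW, if_false, Prod.mk.injEq] at h
          obtain ⟨rfl, rfl⟩ := h
          exact ⟨(hl.snd_edge_iff u hu).mpr hbetw, ⟨huW, ht⟩, Or.inr rfl⟩
    · intro u hu v hv huv
      have hu' : u ≠ t := fun h => (mem_filter.mp hu).2.2.ne (congrArg κ h)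
      have hv' : v ≠ t := fun h => (mem_filter.mp hv).2.2.ne (congrArg κ h)
      by_cases huW : u ∈ W <;> by_cases hvW : v ∈ W <;>
        simp only [huW, hvW, if_true, if_false, Prod.mk.injEq] at huv
      exacts [huv.2, absurd huv.2 hu', absurd huv.2.symm hv', huv.1]
  · congr 1
    ext e
    simp only [mem_filter, mem_sdiff, mem_insert, mem_singleton, not_or]
    constructor
    · rintro ⟨he, ⟨ha, hb⟩, hs', ht'⟩
      exact ⟨⟨he, ⟨hG.fst_mem e he, hs', fun h => ha (h ▸ ht)⟩,
        ⟨hG.snd_mem e he, fun h => hs (h ▸ hb), ht'⟩⟩, ha, hb⟩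
    · rintro ⟨⟨he, ⟨-, ha, -⟩, ⟨-, -, hb⟩⟩, hasc⟩
      exact ⟨he, hasc, ha, hb⟩

theorem IsLock.card_lockedSets_insert (hG : IsConvexGraph κ V E) {s t : α}
    (hl : IsLock κ V E (s, t)) (hL : ∀ l ∈ L, l.1 ≠ t ∧ l.2 ≠ t) (p k : ℕ) :
    #(lockedSets V E (insert (s, t) L) (p + 1) (#{u ∈ V | κ s < κ u ∧ κ u < κ t} + k)) =
      #(lockedSets (V \ {s, t}) (inducedEdges E (V \ {s, t})) L p k) := by
  have hst : s ≠ t := fun h => hl.lt.ne (congrArg κ h)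
  have htU : t ∉ V \ {s, t} := by simp
  refine card_nbij' (fun W => W.erase t) (insert t) (fun W hW => ?_) (fun W hW => ?_)
    (fun W hW => ?_) (fun W hW => ?_)
  · obtain ⟨hWV, hlocks, hcard, hasc⟩ := mem_lockedSets.mp hW
    obtain ⟨hsW, htW⟩ := hlocks (s, t) (mem_insert_self _ _)
    refine mem_lockedSets.mpr ⟨fun u hu => ?_, fun l hl' => ?_, ?_, ?_⟩
    · obtain ⟨hut, huW⟩ := mem_erase.mp hu
      simp [hWV huW, hut, ne_of_mem_of_not_mem huW hsW]
    · have := hlocks l (mem_insert_of_mem hl')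
      exact ⟨fun h => this.1 (mem_of_mem_erase h), mem_erase.mpr ⟨(hL l hl').2, this.2⟩⟩
    · rw [card_erase_of_mem htW, hcard, Nat.add_sub_cancel]
    · rw [← ascents_inducedEdges_insert htU, insert_erase htW]
      have := hl.ascents_eq hG hsW htW
      omega
  · obtain ⟨hWU, hlocks, hcard, hasc⟩ := mem_lockedSets.mp hW
    have htW : t ∉ W := fun h => htU (hWU h)
    have hsW : s ∉ insert t W := by
      have : s ∉ W := fun h => by simpa using hWU h
      simp [hst, this]
    refine mem_lockedSets.mpr ⟨insert_subset hl.snd_mem (hWU.trans sdiff_subset),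
      fun l hl' => ?_, ?_, ?_⟩
    · rcases mem_insert.mp hl' with rfl | hl'
      · exact ⟨hsW, mem_insert_self _ _⟩
      · exact ⟨by simp [(hL l hl').1, (hlocks l hl').1], mem_insert_of_mem (hlocks l hl').2⟩
    · rw [card_insert_of_notMem htW, hcard]
    · rw [hl.ascents_eq hG hsW (mem_insert_self _ _), ascents_inducedEdges_insert htU, hasc]
  · exact insert_erase ((mem_lockedSets.mp hW).2.1 (s, t) (mem_insert_self _ _)).2
  · exact erase_insert fun h => htU ((mem_lockedSets.mp hW).1 h)

theorem lockedSets_insert_zero {l : α × α} (k : ℕ) :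
    lockedSets V E (insert l L) 0 k = ∅ := by
  refine eq_empty_of_forall_notMem fun W hW => ?_
  obtain ⟨-, hlocks, hcard, -⟩ := mem_lockedSets.mp hW
  rw [card_eq_zero] at hcard
  simpa [hcard] using (hlocks l (mem_insert_self _ _)).2

theorem lockedSets_insert_card {l : α × α} (hl : l.1 ∈ V) (k : ℕ) :
    lockedSets V E (insert l L) #V k = ∅ := by
  refine eq_empty_of_forall_notMem fun W hW => ?_
  obtain ⟨hWV, hlocks, hcard, -⟩ := mem_lockedSets.mp hW
  rw [eq_of_subset_of_card_le hWV hcard.ge] at hlocks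
  exact (hlocks l (mem_insert_self _ _)).1 hl

theorem IsLock.lockedSets_eq_empty (hG : IsConvexGraph κ V E) {s t : α}
    (hl : IsLock κ V E (s, t)) {p k : ℕ} (hk : k < #{u ∈ V | κ s < κ u ∧ κ u < κ t}) :
    lockedSets V E (insert (s, t) L) p k = ∅ := by
  refine eq_empty_of_forall_notMem fun W hW => ?_
  obtain ⟨-, hlocks, -, hasc⟩ := mem_lockedSets.mp hW
  obtain ⟨hsW, htW⟩ := hlocks _ (mem_insert_self _ _)
  have := hl.ascents_eq hG hsW htW
  omega

theorem IsLock.card_lockedSets_symm (hG : IsConvexGraph κ V E) {s t : α}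
    (hl : IsLock κ V E (s, t)) (hL : ∀ l ∈ L, l.1 ≠ t ∧ l.2 ≠ t)
    (ih : ∀ p ≤ #(V \ {s, t}), ∀ k,
      #(lockedSets (V \ {s, t}) (inducedEdges E (V \ {s, t})) L p k) =
        #(lockedSets (V \ {s, t}) (inducedEdges E (V \ {s, t})) L (#(V \ {s, t}) - p) k))
    {p : ℕ} (hp : p ≤ #V) (k : ℕ) :
    #(lockedSets V E (insert (s, t) L) p k) = #(lockedSets V E (insert (s, t) L) (#V - p) k) := by
  have hU : #(V \ {s, t}) + 2 = #V := by
    rw [← card_pair (fun h => hl.lt.ne (congrArg κ h)), card_sdiff_add_card_eq_card]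
    exact insert_subset hl.fst_mem (singleton_subset_iff.mpr hl.snd_mem)
  rcases p with _ | p
  · rw [Nat.sub_zero, lockedSets_insert_zero, lockedSets_insert_card hl.fst_mem]
  by_cases hpV : p + 1 = #V
  · rw [hpV, Nat.sub_self, lockedSets_insert_zero, lockedSets_insert_card hl.fst_mem]
  by_cases hk : k < #{u ∈ V | κ s < κ u ∧ κ u < κ t}
  · rw [hl.lockedSets_eq_empty hG hk, hl.lockedSets_eq_empty hG hk]
  obtain ⟨k, rfl⟩ := Nat.exists_eq_add_of_le (not_lt.mp hk)
  rw [show #V - (p + 1) = #(V \ {s, t}) - p + 1 by omega, hl.card_lockedSets_insert hG hL,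
    hl.card_lockedSets_insert hG hL, ih p (by omega) k]

theorem card_lockedSets_symm_of_erase {e : α × α} (he : e ∈ E) {p q : ℕ}
    (h₀ : ∀ k, #(lockedSets V (E.erase e) ∅ p k) = #(lockedSets V (E.erase e) ∅ q k))
    (h₁ : ∀ k, #(lockedSets V (E.erase e) {e} p k) = #(lockedSets V (E.erase e) {e} q k))
    (k : ℕ) : #(lockedSets V E ∅ p k) = #(lockedSets V E ∅ q k) := by
  have step (r k : ℕ) :
      #(lockedSets V E ∅ r k) + #(lockedSets V (E.erase e) {e} r k) =
        #(lockedSets V (E.erase e) ∅ r k) +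
          if k = 0 then 0 else #(lockedSets V (E.erase e) {e} r (k - 1)) := by
    split_ifs <;>
      simp only [lockedSets, card_filter, ← sum_add_distrib, add_zero] <;>
      refine sum_congr rfl fun W _ => ?_ <;>
      have := ascents_erase W he <;>
      simp only [notMem_empty, mem_singleton, forall_eq, IsEmpty.forall_iff, implies_true,
        true_and] <;>
      by_cases hP : e.1 ∉ W ∧ e.2 ∈ W
    all_goals first
      | simp only [eq_true hP, if_true, true_and] at this ⊢
      | simp only [eq_false hP, if_false, false_and, add_zero] at this ⊢
    all_goals split_ifs <;> omega
  have hp := step p k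
  have hq := step q k
  rw [h₀, h₁] at hp
  split_ifs at hp hq
  · omega
  · rw [h₁] at hp
    omega

theorem IsConvexGraph.exists_erase_isLock (hκ : Function.Injective κ)
    (hG : IsConvexGraph κ V E) (hE : E.Nonempty) :
    ∃ e ∈ E, IsConvexGraph κ V (E.erase e) ∧ IsLock κ V (E.erase e) e := by
  obtain ⟨e₀, he₀, hmax⟩ := E.exists_max_image (fun e => κ e.2) hE
  obtain ⟨⟨s, t⟩, hst, hmin⟩ := {e ∈ E | e.2 = e₀.2}.exists_min_image (fun e => κ e.1)
    ⟨e₀, mem_filter.mpr ⟨he₀, rfl⟩⟩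
  obtain ⟨hstE, ht : t = e₀.2⟩ := mem_filter.mp hst
  replace hmax (e : α × α) (he : e ∈ E) : κ e.2 ≤ κ t := ht ▸ hmax e he
  replace hmin (e : α × α) (he : e ∈ E) (h : e.2 = t) : κ s ≤ κ e.1 :=
    hmin e (mem_filter.mpr ⟨he, h.trans ht⟩)
  refine ⟨(s, t), hstE, ⟨fun e he => hG.fst_mem e (mem_of_mem_erase he),
    fun e he => hG.snd_mem e (mem_of_mem_erase he), fun e he => hG.lt e (mem_of_mem_erase he),
    fun e he w hw h1 h2 => ?_⟩, ⟨hG.fst_mem _ hstE, hG.snd_mem _ hstE, hG.lt _ hstE,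
    fun u hu => ⟨fun h => ?_, fun h => ?_⟩, fun u hu => ⟨fun h => ?_, fun h => ?_⟩⟩⟩
  · have heE := mem_of_mem_erase he
    obtain ⟨hA, hB⟩ := hG.convex e heE w hw h1 h2
    refine ⟨mem_erase.mpr ⟨fun h => ?_, hA⟩, mem_erase.mpr ⟨fun h => ?_, hB⟩⟩
    · rw [(Prod.mk.inj h).2] at h2
      exact (h2.trans_le (hmax e heE)).false
    · rw [(Prod.mk.inj h).1] at h1
      exact (h1.trans_le (hmin e heE (Prod.mk.inj h).2)).false
  · obtain ⟨hne, h⟩ := mem_erase.mp h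
    exact ⟨hG.lt _ h, (hmax _ h).lt_of_ne fun h' => hne (Prod.ext rfl (hκ h'))⟩
  · obtain ⟨h1, h2⟩ := h
    exact mem_erase.mpr ⟨fun h => h2.ne (by rw [(Prod.mk.inj h).2]),
      (hG.convex _ hstE u hu h1 h2).1⟩
  · obtain ⟨hne, h⟩ := mem_erase.mp h
    exact ⟨(hmin _ h rfl).lt_of_ne fun h' => hne (Prod.ext (hκ h').symm rfl), hG.lt _ h⟩
  · obtain ⟨h1, h2⟩ := h
    exact mem_erase.mpr ⟨fun h => h1.ne' (by rw [(Prod.mk.inj h).1]),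
      (hG.convex _ hstE u hu h1 h2).2⟩

theorem IsConvexGraph.card_lockedSets_empty_symm (hκ : Function.Injective κ)
    (hG : IsConvexGraph κ V E) {p : ℕ} (hp : p ≤ #V) (k : ℕ) :
    #(lockedSets V E ∅ p k) = #(lockedSets V E ∅ (#V - p) k) := by
  induction hN : #E using Nat.strong_induction_on generalizing V E p k with
  | _ N ih =>
  rcases E.eq_empty_or_nonempty with rfl | hE
  · have (q : ℕ) : lockedSets V ∅ ∅ q k = if k = 0 then V.powersetCard q else ∅ := by
      ext W
      split_ifs with hk <;> simp [mem_lockedSets, ascents, hk, mem_powersetCard, eq_comm]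
    simp only [this]
    split_ifs
    · rw [card_powersetCard, card_powersetCard, Nat.choose_symm hp]
    · rfl
  · obtain ⟨⟨s, t⟩, he, hG', hl⟩ := hG.exists_erase_isLock hκ hE
    have hlt : #(E.erase (s, t)) < N := hN ▸ card_erase_lt_of_mem he
    refine card_lockedSets_symm_of_erase he (fun k => ih _ hlt hG' hp k rfl) (fun k => ?_) k
    rw [← insert_empty_eq]
    exact hl.card_lockedSets_symm hG' (by simp) (fun q hq k => ih _
      ((card_filter_le _ _).trans_lt hlt) (hG'.induced sdiff_subset) hq k rfl) hp k

theorem IsConvexGraph.card_lockedSets_symm (hκ : Function.Injective κ)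
    (hG : IsConvexGraph κ V E) (hL : ∀ l ∈ L, IsLock κ V E l)
    (hdisj : (L : Set (α × α)).Pairwise
      fun l l' => l.1 ≠ l'.1 ∧ l.1 ≠ l'.2 ∧ l.2 ≠ l'.1 ∧ l.2 ≠ l'.2)
    {p : ℕ} (hp : p ≤ #V) (k : ℕ) :
    #(lockedSets V E L p k) = #(lockedSets V E L (#V - p) k) := by
  induction L using Finset.induction_on generalizing V E p k with
  | empty => exact hG.card_lockedSets_empty_symm hκ hp k
  | insert l L hlL ih =>
    obtain ⟨s, t⟩ := l
    rw [coe_insert, Set.pairwise_insert] at hdisj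
    have hsep (l : α × α) (hl : l ∈ L) : l.1 ∈ V \ {s, t} ∧ l.2 ∈ V \ {s, t} := by
      have := (hdisj.2 l hl (ne_of_mem_of_not_mem hl hlL).symm).1
      have hl' := hL l (mem_insert_of_mem hl)
      simp only [mem_sdiff, mem_insert, mem_singleton, not_or]
      exact ⟨⟨hl'.fst_mem, this.1.symm, this.2.2.1.symm⟩, ⟨hl'.snd_mem, this.2.1.symm,
        this.2.2.2.symm⟩⟩
    refine (hL _ (mem_insert_self _ _)).card_lockedSets_symm hG
      (fun l hl => ⟨?_, ?_⟩) (fun q hq k => ih (hG.induced sdiff_subset)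
        (fun l hl => (hL l (mem_insert_of_mem hl)).induced sdiff_subset (hsep l hl).1
          (hsep l hl).2) hdisj.1 hq k) hp k
    · exact fun h => by simpa [h] using (hsep l hl).1
    · exact fun h => by simpa [h] using (hsep l hl).2

end ConvexGraph

namespace HHL

def cellKey (m : ℕ) (x : ℕ × ℕ) : ℕ ×ₗ ℕ := toLex (dm m x, x.1)

def IsDEdge (m : ℕ) (x y : ℕ × ℕ) : Prop :=
  cellKey m x < cellKey m y ∧ cellKey m y < toLex (dm m x + m, x.1)

@[simp]
theorem cell_fst {n : ℕ} (lam : Fin n → ℕ) (i : Fin n) : (cell lam i).1 = i := rfl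

noncomputable def tieContrib (m : ℕ) (x y : ℕ × ℕ) : ℕ :=
  if dLess m x y then contrib m x y else contrib m y x

section PairArithmetic

variable {m : ℕ} {x y : ℕ × ℕ}

theorem contrib_eq_tieContrib_add (hrow : x.1 < y.1) (hcol : y.2 ≤ x.2)
    (hsame : y.2 = x.2 → dm m x + m ≤ dm m y) :
    contrib m x y = tieContrib m x y + if IsDEdge m x y then 1 else 0 := by
  simp only [tieContrib, contrib, dLess, IsDEdge, cellKey, Prod.Lex.toLex_lt_toLex,
    abs_eq_max_neg]
  split_ifs <;> omega

theorem contrib_swap_eq_tieContrib_add (hrow : x.1 < y.1) (hcol : y.2 ≤ x.2)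
    (hsame : y.2 = x.2 → dm m x + m ≤ dm m y) :
    contrib m y x = tieContrib m x y + if IsDEdge m y x then 1 else 0 := by
  simp only [tieContrib, contrib, dLess, IsDEdge, cellKey, Prod.Lex.toLex_lt_toLex,
    abs_eq_max_neg]
  split_ifs <;> omega

end PairArithmetic

section Merge

variable {n : ℕ} {a : ℕ} {T : Fin n → ℕ} {i j : Fin n}

def mergeLetter (a : ℕ) (T : Fin n → ℕ) : Fin n → ℕ :=
  fun i => if T i = a + 1 then a else T i

def upperCells (a : ℕ) (T : Fin n → ℕ) : Finset (Fin n) := {i | T i = a + 1}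

def letterCells (a : ℕ) (σ : Fin n → ℕ) : Finset (Fin n) := {i | σ i = a}

def splitLetter (a : ℕ) (σ : Fin n → ℕ) (W : Finset (Fin n)) : Fin n → ℕ :=
  fun i => if σ i = a ∧ i ∈ W then a + 1 else σ i

theorem mergeLetter_ne_succ : mergeLetter a T i ≠ a + 1 := by
  unfold mergeLetter; split_ifs <;> omega

theorem mergeLetter_eq_iff : mergeLetter a T i = a ↔ T i = a ∨ T i = a + 1 := by
  unfold mergeLetter; split_ifs <;> omega

theorem lt_iff_mergeLetter_lt (h : ¬(mergeLetter a T i = a ∧ mergeLetter a T j = a)) :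
    T i < T j ↔ mergeLetter a T i < mergeLetter a T j := by
  unfold mergeLetter at *; split_ifs at * <;> omega

theorem eq_iff_mergeLetter_eq (h : ¬(mergeLetter a T i = a ∧ mergeLetter a T j = a)) :
    T i = T j ↔ mergeLetter a T i = mergeLetter a T j := by
  unfold mergeLetter at *; split_ifs at * <;> omega

theorem mergeLetter_splitLetter {σ : Fin n → ℕ} (hσ : ∀ i, σ i ≠ a + 1)
    (W : Finset (Fin n)) :
    mergeLetter a (splitLetter a σ W) = σ := by
  funext i
  have := hσ i
  unfold mergeLetter splitLetter
  split_ifs <;> omega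

theorem upperCells_splitLetter {σ : Fin n → ℕ} (hσ : ∀ i, σ i ≠ a + 1)
    {W : Finset (Fin n)} (hW : W ⊆ letterCells a σ) : upperCells a (splitLetter a σ W) = W := by
  ext i
  have := hσ i
  have := @hW i
  simp only [letterCells, mem_filter, mem_univ, true_and] at *
  simp only [upperCells, mem_filter, mem_univ, true_and]
  unfold HHL.splitLetter
  by_cases hi : i ∈ W <;> simp_all

theorem splitLetter_mergeLetter (T : Fin n → ℕ) :
    splitLetter a (mergeLetter a T) (upperCells a T) = T := by
  funext i
  simp only [splitLetter, mergeLetter, upperCells, mem_filter, mem_univ, true_and]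
  split_ifs <;> omega

end Merge

section Decomposition

variable {m n : ℕ} {lam : Fin n → ℕ} {i j : Fin n}

noncomputable def dinvTerm (m : ℕ) (lam T : Fin n → ℕ) (p : Fin n × Fin n) : ℕ :=
  if T p.1 < T p.2 then contrib m (cell lam p.1) (cell lam p.2)
  else if T p.1 = T p.2 ∧ p.1 < p.2 then tieContrib m (cell lam p.1) (cell lam p.2)
  else 0

noncomputable def dEdges (m : ℕ) (lam : Fin n → ℕ) (a : ℕ) (σ : Fin n → ℕ) :
    Finset (Fin n × Fin n) :=
  {e | σ e.1 = a ∧ σ e.2 = a ∧ IsDEdge m (cell lam e.1) (cell lam e.2)}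

theorem dm_cell_add_le (hij : i < j) (hcol : lam j = lam i) :
    dm m (cell lam i) + m ≤ dm m (cell lam j) := by
  have := Nat.mul_le_mul_left m (show (i : ℕ) + 1 ≤ j from hij)
  simp only [dm, cell, hcol]
  rw [mul_add, mul_one] at this
  omega

theorem dinvTerm_add_dinvTerm_of_lt (hlam : Antitone lam) (a : ℕ) (T : Fin n → ℕ)
    (hij : i < j) :
    dinvTerm m lam T (i, j) + dinvTerm m lam T (j, i) =
      dinvTerm m lam (mergeLetter a T) (i, j) + dinvTerm m lam (mergeLetter a T) (j, i) +
        ((if (i, j) ∈ dEdges m lam a (mergeLetter a T) ∧ i ∉ upperCells a T ∧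
            j ∈ upperCells a T then 1 else 0) +
          if (j, i) ∈ dEdges m lam a (mergeLetter a T) ∧ j ∉ upperCells a T ∧
            i ∈ upperCells a T then 1 else 0) := by
  by_cases hV : mergeLetter a T i = a ∧ mergeLetter a T j = a
  · have hrow : (cell lam i).1 < (cell lam j).1 := hij
    have hcol : (cell lam j).2 ≤ (cell lam i).2 := hlam hij.le
    have hsame := dm_cell_add_le (m := m) (lam := lam) hij
    rcases mergeLetter_eq_iff.mp hV.1 with hi | hi <;>
      rcases mergeLetter_eq_iff.mp hV.2 with hj | hj <;>
      simp [dinvTerm, dEdges, upperCells, hV, hi, hj, hij, hij.not_gt,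
        contrib_eq_tieContrib_add hrow hcol hsame, contrib_swap_eq_tieContrib_add hrow hcol hsame]
  · have hji : ¬(mergeLetter a T j = a ∧ mergeLetter a T i = a) := fun h => hV ⟨h.2, h.1⟩
    have h1 : dinvTerm m lam T (i, j) = dinvTerm m lam (mergeLetter a T) (i, j) := by
      simp only [dinvTerm, lt_iff_mergeLetter_lt hV, eq_iff_mergeLetter_eq hV]
    have h2 : dinvTerm m lam T (j, i) = dinvTerm m lam (mergeLetter a T) (j, i) := by
      simp only [dinvTerm, lt_iff_mergeLetter_lt hji, eq_iff_mergeLetter_eq hji]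
    simp only [h1, h2, dEdges, mem_filter, mem_univ, true_and]
    rw [if_neg fun h => hV ⟨h.1.1, h.1.2.1⟩, if_neg fun h => hV ⟨h.1.2.1, h.1.1⟩, add_zero,
      add_zero]

theorem dinvm_eq_sum_dinvTerm (T : Fin n → ℕ) : dinvm m lam T = ∑ p, dinvTerm m lam T p := rfl

theorem dinvm_eq_dinvm_mergeLetter_add (hlam : Antitone lam) (a : ℕ) (T : Fin n → ℕ) :
    dinvm m lam T = dinvm m lam (mergeLetter a T) +
      ascents (dEdges m lam a (mergeLetter a T)) (upperCells a T) := by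
  set ind : Fin n × Fin n → ℕ := fun e =>
    if e ∈ dEdges m lam a (mergeLetter a T) ∧ e.1 ∉ upperCells a T ∧ e.2 ∈ upperCells a T
    then 1 else 0
  have hpair (p : Fin n × Fin n) : dinvTerm m lam T p + dinvTerm m lam T p.swap =
      dinvTerm m lam (mergeLetter a T) p + dinvTerm m lam (mergeLetter a T) p.swap +
        (ind p + ind p.swap) := by
    obtain ⟨i, j⟩ := p
    rcases lt_trichotomy i j with hij | rfl | hij
    · exact dinvTerm_add_dinvTerm_of_lt hlam a T hij
    · simp [dinvTerm, ind, dEdges, IsDEdge]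
    · have := dinvTerm_add_dinvTerm_of_lt (m := m) hlam a T hij
      simp only [Prod.swap_prod_mk, ind] at this ⊢
      omega
  have hswap (f : Fin n × Fin n → ℕ) : ∑ p, (f p + f p.swap) = 2 * ∑ p, f p := by
    rw [sum_add_distrib, two_mul, ← (Equiv.prodComm _ _).sum_comp f]
    rfl
  have : 2 * dinvm m lam T = 2 * dinvm m lam (mergeLetter a T) +
      2 * ascents (dEdges m lam a (mergeLetter a T)) (upperCells a T) := by
    rw [dinvm_eq_sum_dinvTerm, dinvm_eq_sum_dinvTerm, ascents_eq_sum, ← hswap, ← hswap,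
      ← hswap, ← sum_add_distrib]
    exact sum_congr rfl fun p _ => hpair p
  omega

end Decomposition

section Fiber

variable {m n : ℕ} {lam : Fin n → ℕ} {a : ℕ}

noncomputable def columnLocks (lam : Fin n → ℕ) (a : ℕ) (σ : Fin n → ℕ) :
    Finset (Fin n × Fin n) :=
  {l | SameCol lam l.1 l.2 ∧ σ l.1 = a ∧ σ l.2 = a}

theorem cellKey_injective : Function.Injective fun i : Fin n => cellKey m (cell lam i) :=
  fun _ _ h => Fin.ext (congrArg (fun x => (ofLex x).2) h)

theorem isConvexGraph_dEdges (σ : Fin n → ℕ) :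
    IsConvexGraph (fun i => cellKey m (cell lam i)) (letterCells a σ) (dEdges m lam a σ) where
  fst_mem e he := by simp_all [dEdges, letterCells]
  snd_mem e he := by simp_all [dEdges, letterCells]
  lt e he := (mem_filter.mp he).2.2.2.1
  convex e he w hw h1 h2 := by
    simp only [dEdges, letterCells, mem_filter, mem_univ, true_and, IsDEdge, cellKey,
      Prod.Lex.toLex_lt_toLex] at he hw h1 h2 ⊢
    omega

theorem isLock_of_sameCol (σ : Fin n → ℕ) {s t : Fin n} (hst : SameCol lam s t) (hs : σ s = a)
    (ht : σ t = a) :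
    IsLock (fun i => cellKey m (cell lam i)) (letterCells a σ) (dEdges m lam a σ) (s, t) := by
  have hd : dm m (cell lam t) = dm m (cell lam s) + m := by
    simp only [dm, cell, ← hst.1, ← hst.2]
    ring
  have hrow (u v : Fin n) (h : (u : ℕ) = v) : dm m (cell lam u) = dm m (cell lam v) := by
    rw [Fin.ext h]
  have hts : (t : ℕ) = s + 1 := hst.1.symm
  refine ⟨by simpa [letterCells] using hs, by simpa [letterCells] using ht, ?_,
    fun u hu => ?_, fun u hu => ?_⟩
  · simp only [cellKey, cell_fst, Prod.Lex.toLex_lt_toLex]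
    omega
  all_goals
    have hu' : σ u = a := by simpa [letterCells] using hu
    have := hrow u s
    have := hrow u t
    simp only [dEdges, mem_filter, mem_univ, true_and, hs, ht, hu', IsDEdge, cellKey, cell_fst,
      Prod.Lex.toLex_lt_toLex]
    omega

def mergeFiber (m : ℕ) (lam : Fin n → ℕ) (a : ℕ) (σ : Fin n → ℕ) (p k : ℕ) :
    Set (Fin n → ℕ) :=
  {T | IsSSYT lam T ∧ mergeLetter a T = σ ∧ #(upperCells a T) = p ∧ dinvm m lam T = k}

theorem IsSSYT.upperCells_mem_lockedSets (hlam : Antitone lam) {T : Fin n → ℕ}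
    (hT : IsSSYT lam T) :
    upperCells a T ∈ lockedSets (letterCells a (mergeLetter a T))
      (dEdges m lam a (mergeLetter a T)) (columnLocks lam a (mergeLetter a T))
      #(upperCells a T) (dinvm m lam T - dinvm m lam (mergeLetter a T)) := by
  refine mem_lockedSets.mpr ⟨fun i hi => ?_, fun l hl => ?_, rfl, ?_⟩
  · simp_all [upperCells, letterCells, mergeLetter]
  · simp only [columnLocks, mem_filter, mem_univ, true_and, mergeLetter_eq_iff] at hl
    have := hT.2 _ _ hl.1
    simp only [upperCells, mem_filter, mem_univ, true_and]
    omega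
  · have := dinvm_eq_dinvm_mergeLetter_add (m := m) hlam a T
    omega

theorem IsSSYT.isSSYT_splitLetter (ha : 1 ≤ a) {T₀ : Fin n → ℕ} (hT₀ : IsSSYT lam T₀)
    {W : Finset (Fin n)}
    (hlocks : ∀ l ∈ columnLocks lam a (mergeLetter a T₀), l.1 ∉ W ∧ l.2 ∈ W) :
    IsSSYT lam (splitLetter a (mergeLetter a T₀) W) := by
  have hmerge := mergeLetter_splitLetter (a := a) (σ := mergeLetter a T₀)
    (fun _ => mergeLetter_ne_succ) W
  refine ⟨fun i => ?_, fun i j hij => ?_⟩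
  · have := hT₀.1 i
    unfold HHL.splitLetter mergeLetter
    split_ifs <;> omega
  by_cases hV : mergeLetter a T₀ i = a ∧ mergeLetter a T₀ j = a
  · obtain ⟨hi, hj⟩ := hlocks (i, j) (by simp [columnLocks, hij, hV])
    simp [HHL.splitLetter, hV, hi, hj]
  · rw [lt_iff_mergeLetter_lt (hmerge ▸ hV), hmerge, ← lt_iff_mergeLetter_lt hV]
    exact hT₀.2 i j hij

theorem mergeFiber_eq_image (hlam : Antitone lam) (ha : 1 ≤ a) {T₀ : Fin n → ℕ}
    (hT₀ : IsSSYT lam T₀) {p k : ℕ} (hk : dinvm m lam (mergeLetter a T₀) ≤ k) :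
    mergeFiber m lam a (mergeLetter a T₀) p k = splitLetter a (mergeLetter a T₀) ''
      lockedSets (letterCells a (mergeLetter a T₀)) (dEdges m lam a (mergeLetter a T₀))
        (columnLocks lam a (mergeLetter a T₀)) p (k - dinvm m lam (mergeLetter a T₀)) := by
  ext T
  constructor
  · rintro ⟨hT, hmerge, rfl, rfl⟩
    refine ⟨upperCells a T, ?_, hmerge ▸ splitLetter_mergeLetter T⟩
    rw [← hmerge]
    exact hT.upperCells_mem_lockedSets hlam
  · rintro ⟨W, hW, rfl⟩
    obtain ⟨hWV, hlocks, rfl, hasc⟩ := mem_lockedSets.mp hW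
    have hσ (i : Fin n) : mergeLetter a T₀ i ≠ a + 1 := mergeLetter_ne_succ
    have hdinv :=
      dinvm_eq_dinvm_mergeLetter_add (m := m) hlam a (splitLetter a (mergeLetter a T₀) W)
    rw [mergeLetter_splitLetter hσ, upperCells_splitLetter hσ hWV] at hdinv
    exact ⟨hT₀.isSSYT_splitLetter ha hlocks, mergeLetter_splitLetter hσ W,
      by rw [upperCells_splitLetter hσ hWV], by omega⟩

theorem IsSSYT.pairwise_columnLocks {T : Fin n → ℕ} (hT : IsSSYT lam T) :
    (columnLocks lam a (mergeLetter a T) : Set (Fin n × Fin n)).Pairwise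
      fun l l' => l.1 ≠ l'.1 ∧ l.1 ≠ l'.2 ∧ l.2 ≠ l'.1 ∧ l.2 ≠ l'.2 := by
  intro l hl l' hl' hne
  simp only [columnLocks, coe_filter, mem_univ, true_and, Set.mem_ofPred_eq,
    mergeLetter_eq_iff] at hl hl'
  have hlt := hT.2 _ _ hl.1
  have hlt' := hT.2 _ _ hl'.1
  have hrow := hl.1.1
  have hrow' := hl'.1.1
  have hfst : l.1 ≠ l'.1 := fun h => hne (Prod.ext h (Fin.ext (by omega)))
  refine ⟨hfst, fun h => ?_, fun h => ?_, fun h => hfst (Fin.ext ?_)⟩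
  · rw [h] at hlt hl
    omega
  · rw [h] at hlt hl
    omega
  · have := congrArg Fin.val h
    omega

theorem ncard_mergeFiber (hlam : Antitone lam) (ha : 1 ≤ a) {T₀ : Fin n → ℕ}
    (hT₀ : IsSSYT lam T₀) {p k : ℕ} (hk : dinvm m lam (mergeLetter a T₀) ≤ k) :
    (mergeFiber m lam a (mergeLetter a T₀) p k).ncard =
      #(lockedSets (letterCells a (mergeLetter a T₀)) (dEdges m lam a (mergeLetter a T₀))
        (columnLocks lam a (mergeLetter a T₀)) p (k - dinvm m lam (mergeLetter a T₀))) := by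
  have hσ (i : Fin n) : mergeLetter a T₀ i ≠ a + 1 := mergeLetter_ne_succ
  rw [mergeFiber_eq_image hlam ha hT₀ hk, Set.InjOn.ncard_image, Set.ncard_coe_finset]
  intro W₁ h₁ W₂ h₂ h
  rw [← upperCells_splitLetter hσ (mem_lockedSets.mp h₁).1, h,
    upperCells_splitLetter hσ (mem_lockedSets.mp h₂).1]

theorem ncard_mergeFiber_symm (hlam : Antitone lam) (ha : 1 ≤ a) (σ : Fin n → ℕ) {p : ℕ}
    (hp : p ≤ #(letterCells a σ)) (k : ℕ) :
    (mergeFiber m lam a σ p k).ncard =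
      (mergeFiber m lam a σ (#(letterCells a σ) - p) k).ncard := by
  by_cases h : ∃ T₀, IsSSYT lam T₀ ∧ mergeLetter a T₀ = σ ∧ dinvm m lam σ ≤ k
  · obtain ⟨T₀, hT₀, rfl, hk⟩ := h
    rw [ncard_mergeFiber hlam ha hT₀ hk, ncard_mergeFiber hlam ha hT₀ hk]
    exact (isConvexGraph_dEdges _).card_lockedSets_symm cellKey_injective
      (fun l hl => by
        simp only [columnLocks, mem_filter, mem_univ, true_and] at hl
        exact isLock_of_sameCol _ hl.1 hl.2.1 hl.2.2)
      hT₀.pairwise_columnLocks hp _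
  · have hempty (q : ℕ) : mergeFiber m lam a σ q k = ∅ := by
      refine Set.eq_empty_of_forall_notMem fun T ⟨hT, hmerge, _, hk⟩ =>
        h ⟨T, hT, hmerge, ?_⟩
      have := dinvm_eq_dinvm_mergeLetter_add (m := m) hlam a T
      rw [hmerge] at this
      omega
    rw [hempty, hempty]

end Fiber

section Content

variable {m n : ℕ} {lam : Fin n → ℕ}

theorem hasContent_iff_card {T : Fin n → ℕ} {ρ : List ℕ} :
    HasContent T ρ ↔ ∀ b, #{i | T i = b + 1} = ρ.getD b 0 := by
  simp only [HasContent, ← Set.ncard_coe_finset, coe_filter_univ]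

theorem card_mergeLetter_eq {a v : ℕ} {T : Fin n → ℕ} (h₁ : v ≠ a) (h₂ : v ≠ a + 1) :
    #{i | mergeLetter a T i = v} = #{i | T i = v} := by
  congr 1
  ext i
  simp only [mem_filter, mem_univ, true_and]
  unfold mergeLetter
  split_ifs <;> omega

theorem card_letterCells_mergeLetter {a : ℕ} {T : Fin n → ℕ} :
    #(letterCells a (mergeLetter a T)) = #{i | T i = a} + #(upperCells a T) := by
  rw [upperCells, ← card_union_of_disjoint (disjoint_filter.mpr fun _ _ h => by omega),
    ← filter_or]
  congr 1
  ext i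
  simp [letterCells, mergeLetter_eq_iff]

theorem hasContent_iff_of_mergeLetter (c : ℕ) {T σ : Fin n → ℕ}
    (hσ : mergeLetter (c + 1) T = σ) (ρ : List ℕ) :
    HasContent T ρ ↔
      ((∀ b, b ≠ c → b ≠ c + 1 → #{i | σ i = b + 1} = ρ.getD b 0) ∧
        #(letterCells (c + 1) σ) = ρ.getD c 0 + ρ.getD (c + 1) 0) ∧
      #(upperCells (c + 1) T) = ρ.getD (c + 1) 0 := by
  subst hσ
  have hoff (b : ℕ) (h₁ : b ≠ c) (h₂ : b ≠ c + 1) :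
      #{i | mergeLetter (c + 1) T i = b + 1} = #{i | T i = b + 1} :=
    card_mergeLetter_eq (by omega) (by omega)
  have hV := card_letterCells_mergeLetter (a := c + 1) (T := T)
  rw [hasContent_iff_card]
  constructor
  · intro h
    refine ⟨⟨fun b h₁ h₂ => (hoff b h₁ h₂).trans (h b), ?_⟩, h (c + 1)⟩
    rw [hV, h c]
    exact congrArg _ (h (c + 1))
  · rintro ⟨⟨hρ, hVρ⟩, hup⟩ b
    rcases eq_or_ne b c with rfl | h₁
    · omega
    rcases eq_or_ne b (c + 1) with rfl | h₂
    · exact hup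
    rw [← hoff b h₁ h₂]
    exact hρ b h₁ h₂

theorem ncard_eq_of_swap (hlam : Antitone lam) (c k : ℕ) {μ ν : List ℕ}
    (hswap : ∀ b, ν.getD b 0 = μ.getD (Equiv.swap c (c + 1) b) 0) :
    {T | IsSSYT lam T ∧ HasContent T μ ∧ dinvm m lam T = k}.ncard =
      {T | IsSSYT lam T ∧ HasContent T ν ∧ dinvm m lam T = k}.ncard := by
  refine Set.ncard_eq_of_ncard_inter_preimage_eq (f := mergeLetter (c + 1))
    (fun σ => (Set.finite_range (splitLetter (c + 1) σ)).subset ?_) fun σ => ?_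
  · rintro T (rfl : mergeLetter (c + 1) T = σ)
    exact ⟨_, splitLetter_mergeLetter T⟩
  set Cond : List ℕ → Prop := fun ρ =>
    (∀ b, b ≠ c → b ≠ c + 1 → #{i | σ i = b + 1} = ρ.getD b 0) ∧
      #(letterCells (c + 1) σ) = ρ.getD c 0 + ρ.getD (c + 1) 0
  have hfiber (ρ : List ℕ) :
      {T | IsSSYT lam T ∧ HasContent T ρ ∧ dinvm m lam T = k} ∩
          mergeLetter (c + 1) ⁻¹' {σ} =
        {T | Cond ρ ∧ T ∈ mergeFiber m lam (c + 1) σ (ρ.getD (c + 1) 0) k} := by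
    ext T
    simp only [Set.mem_inter_iff, Set.mem_preimage, Set.mem_singleton_iff, mergeFiber,
      Set.mem_ofPred_eq]
    constructor
    · rintro ⟨⟨hT, hC, hk⟩, hσ⟩
      have := (hasContent_iff_of_mergeLetter c hσ ρ).mp hC
      exact ⟨this.1, hT, hσ, this.2, hk⟩
    · rintro ⟨hC, hT, hσ, hup, hk⟩
      exact ⟨⟨hT, (hasContent_iff_of_mergeLetter c hσ ρ).mpr ⟨hC, hup⟩, hk⟩, hσ⟩
  have hoff (b : ℕ) (h₁ : b ≠ c) (h₂ : b ≠ c + 1) : ν.getD b 0 = μ.getD b 0 := by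
    rw [hswap, Equiv.swap_apply_of_ne_of_ne h₁ h₂]
  have hc : ν.getD c 0 = μ.getD (c + 1) 0 := by rw [hswap, Equiv.swap_apply_left]
  have hc' : ν.getD (c + 1) 0 = μ.getD c 0 := by rw [hswap, Equiv.swap_apply_right]
  have hcond : Cond ν ↔ Cond μ := by
    simp only [Cond, hc, hc']
    constructor <;> rintro ⟨h₁, h₂⟩ <;> refine ⟨fun b hb₁ hb₂ => ?_, by omega⟩
    · rw [h₁ b hb₁ hb₂, hoff b hb₁ hb₂]
    · rw [h₁ b hb₁ hb₂, hoff b hb₁ hb₂]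
  rw [hfiber, hfiber]
  by_cases hC : Cond μ
  · simp only [hC, hcond.mpr hC, true_and, Set.ofPred_mem_eq]
    rw [hc', show μ.getD c 0 = #(letterCells (c + 1) σ) - μ.getD (c + 1) 0 by omega]
    exact ncard_mergeFiber_symm hlam (by omega) σ (by omega) k
  · simp [hC, mt hcond.mp hC]

theorem ncard_eq_of_perm (hlam : Antitone lam) (k : ℕ) {μ ν : List ℕ} (h : μ.Perm ν)
    (l : List ℕ) :
    {T | IsSSYT lam T ∧ HasContent T (l ++ μ) ∧ dinvm m lam T = k}.ncard =
      {T | IsSSYT lam T ∧ HasContent T (l ++ ν) ∧ dinvm m lam T = k}.ncard := by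
  induction h generalizing l with
  | nil => rfl
  | cons x _ ih => simpa using ih (l ++ [x])
  | swap x y l' => exact ncard_eq_of_swap hlam l.length k (l.getD_append_cons_cons_swap l' x y 0)
  | trans _ _ ih₁ ih₂ => exact (ih₁ l).trans (ih₂ l)

end Content

theorem statement12_general (m n : ℕ)
    (lam : Fin n → ℕ) (hlam : IsShape m n lam)
    (μ ν : List ℕ) (hperm : μ.Perm ν)
    (k : ℕ) :
    Set.ncard {T : Fin n → ℕ | IsSSYT lam T ∧ HasContent T μ ∧ dinvm m lam T = k} =
    Set.ncard {T : Fin n → ℕ | IsSSYT lam T ∧ HasContent T ν ∧ dinvm m lam T = k} := by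
  simpa using ncard_eq_of_perm hlam.1 k hperm []

/-- Symmetry of `D_n^{(m),λ}(z;q)`: for any two rearranged contents `μ`, `ν`,
the coefficientwise (in `q`) counts of semistandard tableaux of the vertical
strip `(λ+(1^n))/λ`, `λ ⊆ mδ_n`, by the statistic `dinv_m` agree. -/
theorem statement12 (m n : ℕ) (hm : 1 ≤ m) (hn : 1 ≤ n)
    (lam : Fin n → ℕ) (hlam : IsShape m n lam)
    (μ ν : List ℕ) (hpos : ∀ a ∈ μ, 0 < a) (hsum : μ.sum = n) (hperm : μ.Perm ν)
    (k : ℕ) :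
    Set.ncard {T : Fin n → ℕ | IsSSYT lam T ∧ HasContent T μ ∧ dinvm m lam T = k} =
    Set.ncard {T : Fin n → ℕ | IsSSYT lam T ∧ HasContent T ν ∧ dinvm m lam T = k} :=
  statement12_general m n lam hlam μ ν hperm k

end HHL
end
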